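/- arXiv:1805.11763 — 9 statements merged into one kernel-verified Lean document; each statement's English description precedes it below -/
import Mathlib

section
/- For all 0 < c < b ≤ 1, one has ζ_b(b)/ζ_c(c) > b/c, where ζ_t(s) = s + (1-t)·ln(1-s). -/
noncomputable def zeta (t s : ℝ) : ℝ := s + (1 - t) * Real.log (1 - s)

/-! The function `t ↦ ζ_t(t) = t + (1 - t) log (1 - t)` is strictly convex on `[0, 1]` (it is `t`
plus `x log x` at `x = 1 - t`) and vanishes at `0`, so `ζ_t(t) / t`, the slope of its secant
through the origin, is strictly increasing in `t`. -/

open Set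

theorem StrictConvexOn.comp_const_sub {𝕜 E β : Type*} [Semiring 𝕜] [PartialOrder 𝕜]
    [AddCommGroup E] [Module 𝕜 E] [AddCommMonoid β] [PartialOrder β] [SMul 𝕜 β] {s : Set E} {f : E → β} (hf : StrictConvexOn 𝕜 s f) (c : E) :
    StrictConvexOn 𝕜 ((c - ·) ⁻¹' s) (fun x ↦ f (c - x)) := by
  have combo {a b : 𝕜} (hab : a + b = 1) (x y : E) :
      c - (a • x + b • y) = a • (c - x) + b • (c - y) := by
    rw [smul_sub, smul_sub, sub_add_sub_comm, Convex.combo_self hab]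
  refine ⟨fun x hx y hy a b ha hb hab ↦ ?_, fun x hx y hy hxy a b ha hb hab ↦ ?_⟩
  · rw [mem_preimage, combo hab]
    exact hf.1 hx hy ha hb hab
  · beta_reduce
    rw [combo hab]
    exact hf.2 hx hy (sub_right_injective.ne hxy) ha hb hab

theorem strictConvexOn_zeta_self : StrictConvexOn ℝ (Icc 0 1) (fun t ↦ zeta t t) := by
  have h : StrictConvexOn ℝ (Icc 0 1) (fun t ↦ (1 - t) * Real.log (1 - t)) :=
    (Real.strictConvexOn_mul_log.comp_const_sub 1).subset
      (fun t ht ↦ by simpa using ht.2) (convex_Icc 0 1)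
  exact (convexOn_id (convex_Icc 0 1)).add_strictConvexOn h

theorem zeta_self_pos {t : ℝ} (ht₀ : 0 < t) (ht₁ : t ≤ 1) : 0 < zeta t t := by
  have := Real.self_sub_one_lt_mul_log (x := 1 - t) (by linarith) (by linarith)
  unfold zeta
  linarith

theorem stmt1 (b c : ℝ) (hc : 0 < c) (hcb : c < b) (hb : b ≤ 1) :
    zeta b b / zeta c c > b / c := by
  have hb₀ : 0 < b := hc.trans hcb
  have hslope := strictConvexOn_zeta_self.secant_strict_mono (a := 0) ⟨le_rfl, zero_le_one⟩
    ⟨hc.le, hcb.le.trans hb⟩ ⟨hb₀.le, hb⟩ hc.ne' hb₀.ne' hcb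
  have hzeta_zero : zeta 0 0 = 0 := by simp [zeta]
  simp only [hzeta_zero, sub_zero] at hslope
  rw [div_lt_div_iff₀ hc hb₀] at hslope
  rw [gt_iff_lt, div_lt_div_iff₀ hc (zeta_self_pos hc (hcb.le.trans hb))]
  linarith
end

section
/- For fixed s ∈ [0,1), define ξ_s(t) = ζ_t(t) - ζ_t(s) where ζ_t(s) = s + (1-t)ln(1-s). Then ξ_s(0) = ln(1/(1-s)) - s, ξ_s(s) = 0, ξ_s(1) = 1 - s, ξ_s is continuous on [0,1], strictly decreasing on (0,s), and strictly increasing on (s,1). -/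
noncomputable def xi (s t : ℝ) : ℝ := zeta t t - zeta t s

lemma xi_apply (s t : ℝ) :
    xi s t = t + (1 - t) * Real.log (1 - t) - (s + (1 - t) * Real.log (1 - s)) :=
  rfl

-- `x ↦ x log x` is continuous at `0` (where `log 0 = 0`), which is the convention at `t = 1`.
lemma continuous_xi (s : ℝ) : Continuous (xi s) := by
  have h : Continuous fun t : ℝ => (1 - t) * Real.log (1 - t) :=
    Real.continuous_mul_log.comp (continuous_sub_left 1)
  simp only [funext (xi_apply s)]
  fun_prop

lemma hasDerivAt_xi (s : ℝ) {t : ℝ} (ht : t ≠ 1) :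
    HasDerivAt (xi s) (Real.log (1 - s) - Real.log (1 - t)) t := by
  have h1t : 1 - t ≠ 0 := sub_ne_zero.mpr ht.symm
  have hsub : HasDerivAt (fun x : ℝ => 1 - x) (-1) t := by
    simpa using (hasDerivAt_id t).const_sub 1
  have hlog : HasDerivAt (fun x : ℝ => Real.log (1 - x)) (-1 / (1 - t)) t := hsub.log h1t
  have h : HasDerivAt (xi s)
      (1 + (-1 * Real.log (1 - t) + (1 - t) * (-1 / (1 - t))) - (0 + -1 * Real.log (1 - s))) t :=
    ((hasDerivAt_id t).add (hsub.mul hlog)).sub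
      ((hasDerivAt_const t s).add (hsub.mul_const (Real.log (1 - s))))
  refine h.congr_deriv ?_
  field_simp
  ring

lemma strictAntiOn_xi {s : ℝ} (hs : s < 1) : StrictAntiOn (xi s) (Set.Iic s) := by
  refine strictAntiOn_of_deriv_neg (convex_Iic s) (continuous_xi s).continuousOn fun t ht => ?_
  rw [interior_Iic] at ht
  rw [(hasDerivAt_xi s (by linarith [ht.out])).deriv, sub_neg]
  exact Real.log_lt_log (by linarith) (by linarith [ht.out])

lemma strictMonoOn_xi (s : ℝ) : StrictMonoOn (xi s) (Set.Icc s 1) := by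
  refine strictMonoOn_of_deriv_pos (convex_Icc s 1) (continuous_xi s).continuousOn fun t ht => ?_
  rw [interior_Icc] at ht
  rw [(hasDerivAt_xi s ht.2.ne).deriv, sub_pos]
  exact Real.log_lt_log (by linarith [ht.2]) (by linarith [ht.1])

theorem stmt2 (s : ℝ) (hs : s ∈ Set.Ico (0:ℝ) 1) :
    xi s 0 = Real.log (1 / (1 - s)) - s ∧
    xi s s = 0 ∧
    xi s 1 = 1 - s ∧
    ContinuousOn (xi s) (Set.Icc 0 1) ∧
    StrictAntiOn (xi s) (Set.Ioo 0 s) ∧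
    StrictMonoOn (xi s) (Set.Ioo s 1) := by
  refine ⟨?_, sub_self _, ?_, (continuous_xi s).continuousOn,
    (strictAntiOn_xi hs.2).mono (Set.Ioo_subset_Ioc_self.trans Set.Ioc_subset_Iic_self),
    (strictMonoOn_xi s).mono Set.Ioo_subset_Icc_self⟩
  · rw [xi_apply, one_div, Real.log_inv, sub_zero, Real.log_one]
    ring
  · simp [xi_apply]
end

section
/- Fix 0 ≤ c < b ≤ 1 and define f(t) = ρ(t,b,c). Then f(0) = ζ_b(b)/ζ_c(c), f(b) = 0, f(1) = (1-b)/(1-c), f(t) → +∞ as t → c, f is continuous on [0,c) and (c,1], strictly increasing on (0,c) and on (b,1), and strictly decreasing on (c,b). -/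
noncomputable def rho (a b c : ℝ) : ℝ := if a < 1 then xi a b / xi a c else (1 - b) / (1 - c)

open Real Set Filter Topology

section SignOfStrictConvex

variable {𝕜 : Type*} [Field 𝕜] [LinearOrder 𝕜] [IsStrictOrderedRing 𝕜] {s : Set 𝕜}
  {f : 𝕜 → 𝕜} {x y z : 𝕜}

theorem StrictConvexOn.neg_of_mem_Ioo (hf : StrictConvexOn 𝕜 s f) (hx : x ∈ s) (hy : y ∈ s)
    (hfx : f x = 0) (hfy : f y = 0) (hz : z ∈ Ioo x y) : f z < 0 := by
  have hslope := hf.slope_strict_mono_adjacent hx hy hz.1 hz.2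
  rw [hfx, hfy] at hslope
  by_contra! h
  have h₁ : 0 ≤ (f z - 0) / (z - x) := div_nonneg (by linarith) (sub_pos.2 hz.1).le
  have h₂ : (0 - f z) / (y - z) ≤ 0 :=
    div_nonpos_of_nonpos_of_nonneg (by linarith) (sub_pos.2 hz.2).le
  linarith

theorem StrictConvexOn.pos_of_lt_left (hf : StrictConvexOn 𝕜 s f) (hz : z ∈ s) (hy : y ∈ s)
    (hfx : f x = 0) (hfy : f y = 0) (hzx : z < x) (hxy : x < y) : 0 < f z := by
  have hslope := hf.slope_strict_mono_adjacent hz hy hzx hxy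
  rw [hfx, hfy, sub_self, zero_div, div_lt_iff₀ (sub_pos.2 hzx)] at hslope
  linarith

theorem StrictConvexOn.pos_of_right_lt (hf : StrictConvexOn 𝕜 s f) (hx : x ∈ s) (hz : z ∈ s)
    (hfx : f x = 0) (hfy : f y = 0) (hxy : x < y) (hyz : y < z) : 0 < f z := by
  have hslope := hf.slope_strict_mono_adjacent hx hz hxy hyz
  rw [hfx, hfy, sub_self, zero_div, lt_div_iff₀ (sub_pos.2 hyz)] at hslope
  linarith

end SignOfStrictConvex

lemma xi_self (a : ℝ) : xi a a = 0 := sub_self _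

lemma xi_eq (a t : ℝ) : xi a t = t - a + (1 - t) * (log (1 - t) - log (1 - a)) := by
  unfold xi zeta; ring

lemma xi_one (a : ℝ) : xi a 1 = 1 - a := by simp [xi_eq]

lemma xi_pos {x y : ℝ} (hx : x < 1) (hy : y ≤ 1) (hxy : x ≠ y) : 0 < xi x y := by
  rcases hy.lt_or_eq with hy | rfl
  · have hu : 0 < 1 - x := by linarith
    have hv : 0 < 1 - y := by linarith
    have hr : (1 - x) / (1 - y) ≠ 1 := by
      rw [ne_eq, div_eq_one_iff_eq hv.ne']
      contrapose! hxy
      linarith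
    have hlog := mul_lt_mul_of_pos_left (log_lt_sub_one_of_pos (div_pos hu hv) hr) hv
    rw [log_div hu.ne' hv.ne', show (1 - y) * ((1 - x) / (1 - y) - 1) = y - x by field_simp; ring]
      at hlog
    rw [xi_eq]
    linarith
  · rw [xi_one]
    linarith

lemma hasDerivAt_xi_left (y : ℝ) {x : ℝ} (hx : x < 1) :
    HasDerivAt (fun t => xi t y) ((x - y) / (1 - x)) x := by
  have hx' : 1 - x ≠ 0 := by linarith
  have hlog : HasDerivAt (fun t => log (1 - t)) (-1 / (1 - x)) x :=
    ((hasDerivAt_id x).const_sub 1).log hx'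
  refine (((hasDerivAt_id' x).add (hlog.const_mul (1 - y))).const_sub (zeta y y)).congr_deriv ?_
  field_simp
  ring

noncomputable def rhoDerivNum (b c x : ℝ) : ℝ := (x - b) * xi x c - (x - c) * xi x b

lemma rhoDerivNum_at_b (b c : ℝ) : rhoDerivNum b c b = 0 := by simp [rhoDerivNum, xi_self]

lemma rhoDerivNum_at_c (b c : ℝ) : rhoDerivNum b c c = 0 := by simp [rhoDerivNum, xi_self]

lemma rhoDerivNum_one_left (c x : ℝ) :
    rhoDerivNum 1 c x = (1 - c) * (x - 1) * (log (1 - c) - log (1 - x)) := by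
  simp only [rhoDerivNum, xi_eq]
  ring

lemma hasDerivAt_rhoDerivNum (b c : ℝ) {x : ℝ} (hx : x < 1) :
    HasDerivAt (rhoDerivNum b c) (xi x c - xi x b) x := by
  refine ((((hasDerivAt_id' x).sub_const b).mul (hasDerivAt_xi_left c hx)).sub
    (((hasDerivAt_id' x).sub_const c).mul (hasDerivAt_xi_left b hx))).congr_deriv ?_
  ring

lemma strictConvexOn_rhoDerivNum {b c : ℝ} (hcb : c < b) :
    StrictConvexOn ℝ (Iio 1) (rhoDerivNum b c) := by
  refine strictConvexOn_of_deriv2_pos (convex_Iio 1)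
    (fun x hx => (hasDerivAt_rhoDerivNum b c hx).continuousAt.continuousWithinAt) ?_
  rw [interior_Iio]
  intro x (hx : x < 1)
  have hderiv : deriv (rhoDerivNum b c) =ᶠ[𝓝 x] fun t => xi t c - xi t b :=
    eventually_of_mem (Iio_mem_nhds hx) fun t ht => (hasDerivAt_rhoDerivNum b c ht).deriv
  have hderiv2 : HasDerivAt (fun t => xi t c - xi t b)
      ((x - c) / (1 - x) - (x - b) / (1 - x)) x :=
    (hasDerivAt_xi_left c hx).sub (hasDerivAt_xi_left b hx)
  rw [Function.iterate_succ_apply', Function.iterate_one, hderiv.deriv_eq, hderiv2.deriv,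
    ← sub_div]
  exact div_pos (by linarith) (by linarith)

section Sign

variable {b c t : ℝ}

lemma rhoDerivNum_pos_of_lt (hcb : c < b) (hb : b ≤ 1) (ht : t < c) :
    0 < rhoDerivNum b c t := by
  rcases hb.lt_or_eq with hb | rfl
  · exact (strictConvexOn_rhoDerivNum hcb).pos_of_lt_left (ht.trans (hcb.trans hb)) hb
      (rhoDerivNum_at_c b c) (rhoDerivNum_at_b b c) ht hcb
  · rw [rhoDerivNum_one_left]
    exact mul_pos_of_neg_of_neg (mul_neg_of_pos_of_neg (by linarith) (by linarith))
      (sub_neg.2 (log_lt_log (by linarith) (by linarith)))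

lemma rhoDerivNum_neg (hcb : c < b) (hb : b ≤ 1) (ht : t ∈ Ioo c b) :
    rhoDerivNum b c t < 0 := by
  rcases hb.lt_or_eq with hb | rfl
  · exact (strictConvexOn_rhoDerivNum hcb).neg_of_mem_Ioo (hcb.trans hb) hb
      (rhoDerivNum_at_c b c) (rhoDerivNum_at_b b c) ht
  · rw [rhoDerivNum_one_left]
    exact mul_neg_of_neg_of_pos (mul_neg_of_pos_of_neg (by linarith) (by linarith [ht.2]))
      (sub_pos.2 (log_lt_log (by linarith [ht.2]) (by linarith [ht.1])))

lemma rhoDerivNum_pos_of_gt (hcb : c < b) (ht : t ∈ Ioo b 1) : 0 < rhoDerivNum b c t :=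
  (strictConvexOn_rhoDerivNum hcb).pos_of_right_lt (hcb.trans (ht.1.trans ht.2)) ht.2
    (rhoDerivNum_at_c b c) (rhoDerivNum_at_b b c) hcb ht.1

end Sign

section Rho

variable {b c x : ℝ} {s : Set ℝ}

lemma rho_of_lt_one (hx : x < 1) : rho x b c = xi x b / xi x c := if_pos hx

lemma rho_one : rho 1 b c = (1 - b) / (1 - c) := if_neg (lt_irrefl 1)

lemma hasDerivAt_rho (hc : c ≤ 1) (hx : x < 1) (hxc : x ≠ c) :
    HasDerivAt (fun t => rho t b c) (rhoDerivNum b c x / ((1 - x) * xi x c ^ 2)) x := by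
  have hxi := (xi_pos hx hc hxc).ne'
  refine (((hasDerivAt_xi_left b hx).div (hasDerivAt_xi_left c hx) hxi).congr_deriv ?_)
    |>.congr_of_eventuallyEq ?_
  · rw [rhoDerivNum]
    field_simp
  · filter_upwards [Iio_mem_nhds hx] with t ht using rho_of_lt_one ht

lemma one_sub_mul_xi_sq_pos (hc : c ≤ 1) (hx : x < 1) (hxc : x ≠ c) :
    0 < (1 - x) * xi x c ^ 2 :=
  mul_pos (sub_pos.2 hx) (pow_pos (xi_pos hx hc hxc) 2)

lemma continuousOn_rho (hc : c ≤ 1) (hs : s ⊆ Iio 1) (hcs : c ∉ s) :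
    ContinuousOn (fun t => rho t b c) s := fun _ hx =>
  (hasDerivAt_rho hc (hs hx) (ne_of_mem_of_not_mem hx hcs)).continuousAt.continuousWithinAt

lemma strictMonoOn_rho (hc : c ≤ 1) (hconv : Convex ℝ s) (hs : s ⊆ Iio 1) (hcs : c ∉ s)
    (hpos : ∀ x ∈ s, 0 < rhoDerivNum b c x) : StrictMonoOn (fun t => rho t b c) s := by
  refine strictMonoOn_of_deriv_pos hconv (continuousOn_rho hc hs hcs) fun x hx => ?_
  replace hx := interior_subset hx
  have hxc := ne_of_mem_of_not_mem hx hcs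
  rw [(hasDerivAt_rho hc (hs hx) hxc).deriv]
  exact div_pos (hpos x hx) (one_sub_mul_xi_sq_pos hc (hs hx) hxc)

lemma strictAntiOn_rho (hc : c ≤ 1) (hconv : Convex ℝ s) (hs : s ⊆ Iio 1) (hcs : c ∉ s)
    (hneg : ∀ x ∈ s, rhoDerivNum b c x < 0) : StrictAntiOn (fun t => rho t b c) s := by
  refine strictAntiOn_of_deriv_neg hconv (continuousOn_rho hc hs hcs) fun x hx => ?_
  replace hx := interior_subset hx
  have hxc := ne_of_mem_of_not_mem hx hcs
  rw [(hasDerivAt_rho hc (hs hx) hxc).deriv]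
  exact div_neg_of_neg_of_pos (hneg x hx) (one_sub_mul_xi_sq_pos hc (hs hx) hxc)

lemma tendsto_rho_nhdsNE (hcb : c < b) (hb : b ≤ 1) :
    Tendsto (fun t => rho t b c) (𝓝[≠] c) atTop := by
  have hc : c < 1 := hcb.trans_le hb
  have hlt : ∀ᶠ t in 𝓝[≠] c, t < 1 :=
    eventually_nhdsWithin_of_eventually_nhds (Iio_mem_nhds hc)
  have hnum : Tendsto (fun t => xi t b) (𝓝[≠] c) (𝓝 (xi c b)) :=
    (hasDerivAt_xi_left b hc).continuousAt.tendsto.mono_left nhdsWithin_le_nhds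
  have hden : Tendsto (fun t => xi t c) (𝓝[≠] c) (𝓝[>] 0) := by
    refine tendsto_nhdsWithin_iff.2 ⟨?_, ?_⟩
    · simpa [xi_self] using
        (hasDerivAt_xi_left c hc).continuousAt.tendsto.mono_left nhdsWithin_le_nhds
    · filter_upwards [hlt, self_mem_nhdsWithin] with t ht htc using xi_pos ht hc.le htc
  refine (Tendsto.pos_mul_atTop (xi_pos hc hb hcb.ne) hnum
    (tendsto_inv_nhdsGT_zero.comp hden)).congr' ?_
  filter_upwards [hlt] with t ht
  rw [rho_of_lt_one ht, div_eq_mul_inv]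
  rfl

lemma tendsto_neg_log_one_sub_nhdsLT_one :
    Tendsto (fun t => -log (1 - t)) (𝓝[<] 1) atTop := by
  have h : Tendsto (fun t : ℝ => 1 - t) (𝓝[<] 1) (𝓝[>] 0) := by
    refine tendsto_nhdsWithin_iff.2 ⟨?_, ?_⟩
    · simpa using ((continuous_sub_left (1 : ℝ)).tendsto 1).mono_left nhdsWithin_le_nhds
    · filter_upwards [self_mem_nhdsWithin] with t (ht : t < 1) using sub_pos.2 ht
  exact tendsto_neg_atBot_atTop.comp (tendsto_log_nhdsGT_zero.comp h)

lemma tendsto_xi_div_neg_log (y : ℝ) :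
    Tendsto (fun t => xi t y / -log (1 - t)) (𝓝[<] 1) (𝓝 (1 - y)) := by
  have hA : Tendsto (fun t => y - t + (1 - y) * log (1 - y)) (𝓝[<] 1)
      (𝓝 (y - 1 + (1 - y) * log (1 - y))) :=
    ((Continuous.tendsto (by fun_prop) 1).mono_left nhdsWithin_le_nhds)
  have hlim := (hA.div_atTop tendsto_neg_log_one_sub_nhdsLT_one).add_const (1 - y)
  rw [zero_add] at hlim
  refine hlim.congr' ?_
  filter_upwards [tendsto_neg_log_one_sub_nhdsLT_one.eventually_gt_atTop 0] with t ht
  have hlog : log (1 - t) ≠ 0 := (neg_pos.1 ht).ne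
  rw [xi_eq]
  field_simp
  ring

lemma continuousWithinAt_rho_one (hc : c < 1) :
    ContinuousWithinAt (fun t => rho t b c) (Iic 1) 1 := by
  rw [← continuousWithinAt_Iio_iff_Iic, ContinuousWithinAt, rho_one]
  refine ((tendsto_xi_div_neg_log b).div (tendsto_xi_div_neg_log c)
    (sub_ne_zero.2 hc.ne')).congr' ?_
  filter_upwards [self_mem_nhdsWithin,
    tendsto_neg_log_one_sub_nhdsLT_one.eventually_gt_atTop 0] with t (ht : t < 1) hlog
  rw [Pi.div_apply, rho_of_lt_one ht, div_div_div_cancel_right₀ hlog.ne']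

lemma continuousOn_rho_Ioc (hc : c < 1) : ContinuousOn (fun t => rho t b c) (Ioc c 1) := by
  intro x hx
  rcases hx.2.lt_or_eq with hx1 | rfl
  · exact (hasDerivAt_rho hc.le hx1 hx.1.ne').continuousAt.continuousWithinAt
  · exact (continuousWithinAt_rho_one hc).mono Ioc_subset_Iic_self

end Rho

theorem stmt7_general (b c : ℝ) (hcb : c < b) (hb : b ≤ 1) :
    rho 0 b c = zeta b b / zeta c c ∧
    rho b b c = 0 ∧
    rho 1 b c = (1 - b) / (1 - c) ∧
    Filter.Tendsto (fun t => rho t b c) (nhdsWithin c (Set.Icc 0 1 \ {c})) Filter.atTop ∧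
    ContinuousOn (fun t => rho t b c) (Set.Ico 0 c) ∧
    ContinuousOn (fun t => rho t b c) (Set.Ioc c 1) ∧
    StrictMonoOn (fun t => rho t b c) (Set.Ioo 0 c) ∧
    StrictMonoOn (fun t => rho t b c) (Set.Ioo b 1) ∧
    StrictAntiOn (fun t => rho t b c) (Set.Ioo c b) := by
  have hc : c < 1 := hcb.trans_le hb
  refine ⟨by simp [rho, xi, zeta], ?_, rho_one, ?_, ?_, continuousOn_rho_Ioc hc, ?_, ?_, ?_⟩
  · rcases hb.lt_or_eq with hb | rfl
    · rw [rho_of_lt_one hb, xi_self, zero_div]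
    · simp [rho_one]
  · exact (tendsto_rho_nhdsNE hcb hb).mono_left (nhdsWithin_mono _ fun t ht => ht.2)
  · exact continuousOn_rho hc.le (fun t ht => ht.2.trans hc) fun h => h.2.false
  · exact strictMonoOn_rho hc.le (convex_Ioo 0 c) (fun t ht => ht.2.trans hc)
      (fun h => h.2.false) fun t ht => rhoDerivNum_pos_of_lt hcb hb ht.2
  · exact strictMonoOn_rho hc.le (convex_Ioo b 1) (fun t ht => ht.2)
      (fun h => (hcb.trans h.1).false) fun t ht => rhoDerivNum_pos_of_gt hcb ht
  · exact strictAntiOn_rho hc.le (convex_Ioo c b) (fun t ht => ht.2.trans_le hb)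
      (fun h => h.1.false) fun t ht => rhoDerivNum_neg hcb hb ht

theorem stmt7 (b c : ℝ) (hc : 0 ≤ c) (hcb : c < b) (hb : b ≤ 1) :
    rho 0 b c = zeta b b / zeta c c ∧
    rho b b c = 0 ∧
    rho 1 b c = (1 - b) / (1 - c) ∧
    Filter.Tendsto (fun t => rho t b c) (nhdsWithin c (Set.Icc 0 1 \ {c})) Filter.atTop ∧
    ContinuousOn (fun t => rho t b c) (Set.Ico 0 c) ∧
    ContinuousOn (fun t => rho t b c) (Set.Ioc c 1) ∧
    StrictMonoOn (fun t => rho t b c) (Set.Ioo 0 c) ∧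
    StrictMonoOn (fun t => rho t b c) (Set.Ioo b 1) ∧
    StrictAntiOn (fun t => rho t b c) (Set.Ioo c b) :=
  stmt7_general b c hcb hb
end

section
/- Let I = [c,d] with c < d, let f and g be bounded measurable functions on I with g nonincreasing, and suppose ∫_{[c,s]} f dλ ≥ 0 for all s ∈ I, with equality if and only if s = c or s = d. Then ∫_I f·g dλ ≥ 0, with equality if and only if g is constant on (c,d). -/
/-!
Let `F s = ∫_{[c,s]} f` and let `ν` be the Stieltjes measure of the nondecreasing function `-g`.
Integration by parts (Fubini on the region `t < y`) gives
`∫ f g = -g(d) F(d) + ∫_{(c,d]} F dν`, and `F(d) = 0`, so the integral is `∫_{(c,d]} F dν ≥ 0`.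
Since `F > 0` on `(c,d)`, it vanishes only if `ν(c,d) = 0`, i.e. only if `g` is constant on `(c,d)`.
-/

open MeasureTheory Set

namespace StieltjesFunction

variable (S : StieltjesFunction ℝ) {f : ℝ → ℝ} {a b : ℝ}

lemma setIntegral_mul_sub_eq (hf : IntegrableOn f (Icc a b)) :
    ∫ t in Icc a b, f t * (S b - S t) =
      ∫ y in Ioc a b, (∫ t in Icc a y, f t) ∂S.measure := by
  have : IsFiniteMeasure (S.measure.restrict (Ioc a b)) :=
    isFiniteMeasure_restrict.2 measure_Ioc_lt_top.ne
  let E : ℝ × ℝ → ℝ := {p | p.1 < p.2}.indicator fun p ↦ f p.1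
  have hE : Integrable E ((volume.restrict (Icc a b)).prod (S.measure.restrict (Ioc a b))) :=
    (hf.comp_fst _).indicator (measurableSet_lt measurable_fst measurable_snd)
  calc ∫ t in Icc a b, f t * (S b - S t)
      = ∫ t in Icc a b, (∫ y in Ioc a b, E (t, y) ∂S.measure) := by
        refine setIntegral_congr_fun measurableSet_Icc fun t ht ↦ ?_
        have hE_t : (fun y ↦ E (t, y)) = (Ioi t).indicator fun _ ↦ f t := rfl
        rw [hE_t, setIntegral_indicator _root_.measurableSet_Ioi, setIntegral_const, Ioc_inter_Ioi,
          sup_eq_right.2 ht.1, measureReal_def, S.measure_Ioc,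
          ENNReal.toReal_ofReal (sub_nonneg.2 (S.mono ht.2)), smul_eq_mul, mul_comm]
    _ = ∫ y in Ioc a b, (∫ t in Icc a b, E (t, y)) ∂S.measure :=
        integral_integral_swap (f := fun t y ↦ E (t, y)) hE
    _ = ∫ y in Ioc a b, (∫ t in Icc a y, f t) ∂S.measure := by
        refine setIntegral_congr_fun measurableSet_Ioc fun y hy ↦ ?_
        have hE_y : (fun t ↦ E (t, y)) = (Iio y).indicator f := rfl
        have hIco : Icc a b ∩ Iio y = Ico a y := by
          ext t; simp only [mem_inter_iff, mem_Icc, mem_Iio, mem_Ico]; grind [hy.2]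
        rw [hE_y, setIntegral_indicator measurableSet_Iio, hIco]
        exact setIntegral_congr_set Ico_ae_eq_Icc

lemma integrableOn_mul (hf : IntegrableOn f (Icc a b)) :
    IntegrableOn (fun t ↦ f t * S t) (Icc a b) := by
  refine (hf.bdd_mul S.mono.measurable.aestronglyMeasurable (c := max |S a| |S b|) ?_).congr
    (ae_of_all _ fun t ↦ mul_comm _ _)
  exact ae_restrict_of_forall_mem measurableSet_Icc fun t ht ↦
    abs_le_max_abs_abs (S.mono ht.1) (S.mono ht.2)

lemma setIntegral_mul_eq_sub (hf : IntegrableOn f (Icc a b)) :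
    ∫ t in Icc a b, f t * S t =
      S b * (∫ t in Icc a b, f t) - ∫ y in Ioc a b, (∫ t in Icc a y, f t) ∂S.measure := by
  simp_rw [← S.setIntegral_mul_sub_eq hf, mul_sub]
  rw [integral_sub (hf.mul_const _) (S.integrableOn_mul hf), integral_mul_const]
  ring

end StieltjesFunction

lemma Monotone.ae_stieltjesFunction_eq {h : ℝ → ℝ} (hh : Monotone h) :
    ∀ᵐ x, hh.stieltjesFunction x = h x := by
  have hcont : ∀ᵐ x, ContinuousAt h x :=
    ae_iff.2 (hh.countable_not_continuousAt.measure_zero volume)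
  filter_upwards [hcont] with x hx
  rw [hh.stieltjesFunction_eq, hx.continuousWithinAt.rightLim_eq]

lemma Monotone.eq_of_stieltjesFunction_measure_Ioo_eq_zero {h : ℝ → ℝ} (hh : Monotone h)
    {a b : ℝ} (h0 : hh.stieltjesFunction.measure (Ioo a b) = 0) :
    ∀ x ∈ Ioo a b, ∀ y ∈ Ioo a b, h x = h y := by
  set S := hh.stieltjesFunction
  have h_anti : ∀ x ∈ Ioo a b, ∀ y ∈ Ioo a b, x ≤ y → h y ≤ h x := by
    intro x hx y hy hxy
    obtain ⟨w, haw, hwx⟩ := exists_between hx.1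
    have hSwy : S y ≤ S w := by
      have hν : S.measure (Ioc w y) = 0 :=
        measure_mono_null
          (show Ioc w y ⊆ Ioo a b from fun t ht ↦ ⟨haw.trans ht.1, ht.2.trans_lt hy.2⟩) h0
      rwa [S.measure_Ioc, ENNReal.ofReal_eq_zero, sub_nonpos] at hν
    calc h y ≤ S y := by rw [hh.stieltjesFunction_eq]; exact hh.le_rightLim le_rfl
      _ ≤ S w := hSwy
      _ ≤ h x := by rw [hh.stieltjesFunction_eq]; exact hh.rightLim_le hwx
  intro x hx y hy
  rcases le_total x y with hxy | hyx
  · exact le_antisymm (hh hxy) (h_anti x hx y hy hxy)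
  · exact le_antisymm (h_anti y hy x hx hyx) (hh hyx)

lemma measure_eq_zero_of_setIntegral_eq_zero {α : Type*} [MeasurableSpace α] {μ : Measure α}
    {F : α → ℝ} {s t : Set α} (hs : MeasurableSet s) (hF : IntegrableOn F s μ)
    (hF_nonneg : ∀ x ∈ s, 0 ≤ F x) (hts : t ⊆ s) (hF_ne : ∀ x ∈ t, F x ≠ 0)
    (h0 : ∫ x in s, F x ∂μ = 0) : μ t = 0 := by
  have hpos := setIntegral_pos_iff_support_of_nonneg_ae
    (ae_restrict_of_forall_mem hs hF_nonneg) hF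
  rw [h0, lt_self_iff_false, false_iff, not_lt, nonpos_iff_eq_zero] at hpos
  exact measure_mono_null
    (show t ⊆ F.support ∩ s from fun x hx ↦ ⟨hF_ne x hx, hts hx⟩) hpos

section AntitoneOn

variable {c d : ℝ} {f g : ℝ → ℝ}

lemma AntitoneOn.monotone_neg_projIcc (hcd : c ≤ d) (hg : AntitoneOn g (Icc c d)) :
    Monotone fun x ↦ -g (projIcc c d hcd x) := fun x y hxy ↦
  neg_le_neg (hg (projIcc c d hcd x).2 (projIcc c d hcd y).2 (monotone_projIcc hcd hxy))

lemma AntitoneOn.setIntegral_mul_eq (hcd : c ≤ d) (hg : AntitoneOn g (Icc c d))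
    (hf : IntegrableOn f (Icc c d)) (hf0 : ∫ t in Icc c d, f t = 0) :
    ∫ t in Icc c d, f t * g t = ∫ y in Ioc c d, (∫ t in Icc c y, f t)
      ∂(hg.monotone_neg_projIcc hcd).stieltjesFunction.measure := by
  set S := (hg.monotone_neg_projIcc hcd).stieltjesFunction
  have hgS : ∀ᵐ t ∂volume.restrict (Icc c d), f t * g t = -(f t * S t) := by
    filter_upwards [ae_restrict_of_ae (hg.monotone_neg_projIcc hcd).ae_stieltjesFunction_eq,
      ae_restrict_mem measurableSet_Icc] with t hSt ht
    rw [hSt, projIcc_of_mem _ ht]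
    ring
  rw [integral_congr_ae hgS, integral_neg, S.setIntegral_mul_eq_sub hf, hf0]
  ring

lemma AntitoneOn.eq_of_measure_Ioo_eq_zero (hcd : c ≤ d) (hg : AntitoneOn g (Icc c d))
    (h0 : (hg.monotone_neg_projIcc hcd).stieltjesFunction.measure (Ioo c d) = 0) :
    ∀ x ∈ Ioo c d, ∀ y ∈ Ioo c d, g x = g y := fun x hx y hy ↦ by
  simpa [projIcc_of_mem _ (Ioo_subset_Icc_self hx), projIcc_of_mem _ (Ioo_subset_Icc_self hy)]
    using (hg.monotone_neg_projIcc hcd).eq_of_stieltjesFunction_measure_Ioo_eq_zero h0 x hx y hy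

lemma setIntegral_mul_eq_zero_of_eq_on_Ioo (hcd : c < d) (hf0 : ∫ t in Icc c d, f t = 0)
    (hg : ∀ x ∈ Ioo c d, ∀ y ∈ Ioo c d, g x = g y) : ∫ t in Icc c d, f t * g t = 0 := by
  have hm : (c + d) / 2 ∈ Ioo c d := ⟨by linarith, by linarith⟩
  calc ∫ t in Icc c d, f t * g t = ∫ t in Ioo c d, f t * g ((c + d) / 2) := by
        rw [← setIntegral_congr_set Ioo_ae_eq_Icc]
        exact setIntegral_congr_fun measurableSet_Ioo fun t ht ↦ by rw [hg t ht _ hm]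
    _ = 0 := by rw [integral_mul_const, setIntegral_congr_set Ioo_ae_eq_Icc, hf0, zero_mul]

end AntitoneOn

theorem stmt9_general (c d : ℝ) (hcd : c < d) (f g : ℝ → ℝ)
    (hfm : Measurable f)
    (hfb : ∃ M, ∀ t ∈ Set.Icc c d, |f t| ≤ M)
    (hg : AntitoneOn g (Set.Icc c d))
    (hpos : ∀ s ∈ Set.Icc c d, 0 ≤ ∫ t in Set.Icc c s, f t)
    (heq : ∀ s ∈ Set.Icc c d, (∫ t in Set.Icc c s, f t) = 0 ↔ s = c ∨ s = d) :
    0 ≤ (∫ t in Set.Icc c d, f t * g t) ∧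
    ((∫ t in Set.Icc c d, f t * g t) = 0 ↔
      ∀ x ∈ Set.Ioo c d, ∀ y ∈ Set.Ioo c d, g x = g y) := by
  obtain ⟨M, hM⟩ := hfb
  have hfi : IntegrableOn f (Icc c d) := IntegrableOn.of_bound measure_Icc_lt_top
    hfm.aestronglyMeasurable M (ae_restrict_of_forall_mem measurableSet_Icc hM)
  set F : ℝ → ℝ := fun s ↦ ∫ t in Icc c s, f t
  have hFd : ∫ t in Icc c d, f t = 0 := (heq d ⟨hcd.le, le_rfl⟩).2 (Or.inr rfl)
  have hF_nonneg : ∀ y ∈ Ioc c d, 0 ≤ F y := fun y hy ↦ hpos y (Ioc_subset_Icc_self hy)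
  have key := hg.setIntegral_mul_eq hcd.le hfi hFd
  refine ⟨key ▸ setIntegral_nonneg measurableSet_Ioc hF_nonneg, fun h0 ↦ ?_,
    setIntegral_mul_eq_zero_of_eq_on_Ioo hcd hFd⟩
  have hFi : IntegrableOn F (Ioc c d) (hg.monotone_neg_projIcc hcd.le).stieltjesFunction.measure :=
    (intervalIntegral.continuousOn_primitive_Icc hfi).integrableOn_Icc.mono_set
      Ioc_subset_Icc_self
  refine hg.eq_of_measure_Ioo_eq_zero hcd.le <|
    measure_eq_zero_of_setIntegral_eq_zero measurableSet_Ioc hFi hF_nonneg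
      Ioo_subset_Ioc_self (fun y hy hFy ↦ ?_) (key ▸ h0)
  rcases (heq y (Ioo_subset_Icc_self hy)).1 hFy with rfl | rfl
  exacts [hy.1.false, hy.2.false]

theorem stmt9 (c d : ℝ) (hcd : c < d) (f g : ℝ → ℝ)
    (hfm : Measurable f) (hgm : Measurable g)
    (hfb : ∃ M, ∀ t ∈ Set.Icc c d, |f t| ≤ M)
    (hgb : ∃ M, ∀ t ∈ Set.Icc c d, |g t| ≤ M)
    (hg : AntitoneOn g (Set.Icc c d))
    (hpos : ∀ s ∈ Set.Icc c d, 0 ≤ ∫ t in Set.Icc c s, f t)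
    (heq : ∀ s ∈ Set.Icc c d, (∫ t in Set.Icc c s, f t) = 0 ↔ s = c ∨ s = d) :
    0 ≤ (∫ t in Set.Icc c d, f t * g t) ∧
    ((∫ t in Set.Icc c d, f t * g t) = 0 ↔
      ∀ x ∈ Set.Ioo c d, ∀ y ∈ Set.Ioo c d, g x = g y) :=
  stmt9_general c d hcd f g hfm hfb hg hpos heq
end

section
/- For g positive, bounded, continuous, nonincreasing on (0,1) and fixed 0 ≤ a < 1, 0 ≤ c < b ≤ 1 with a ≠ b, a ≠ c, the equation F_g(r,a,b,c) = 0 (in r) has a unique positive solution q(g); moreover q(g) ≤ q(1) = ρ(a,b,c), with equality if and only if g is constant on (min(a,c), max(a,b)). -/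
noncomputable def Fg (g : ℝ → ℝ) (r a b c : ℝ) : ℝ :=
  (∫ t in b..a, (b - t) / (1 - t) * g t) - r * ∫ t in c..a, (c - t) / (1 - t) * g t

/-!
Write `J_s(f) = ∫_a^s (s - t)/(1 - t) f(t) dt`. Then `F_g(r) = r J_c(g) - J_b(g)`, so
`q(g) = J_b(g) / J_c(g)`, and `J_s(1) = ξ_a(s)`, so `q(1) = ρ`. The inequality `q(g) ≤ ρ` says
`ξ_a(b) J_c(g) - ξ_a(c) J_b(g) ≥ 0`. With the nonnegative weight `w_s(t) = |s - t|/(1 - t)` on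
the interval between `a` and `s`, this difference is `∫ K g` over `(min a c, max a b)` for the
kernel `K = ξ_a(b) w_c - ξ_a(c) w_b`. The kernel has integral zero and changes sign exactly
once, from positive to negative, at some point `m`: where the two supports overlap,
`(1 - t) K` is affine, elsewhere `K` has a fixed sign, and `∫ K = 0` forces the affine piece to
cross zero. Hence `∫ K g = ∫ K (g - g m) ≥ 0` for antitone `g`, and equality forces `g = g m`
almost everywhere, hence everywhere by monotonicity.
-/

open MeasureTheory Set

section SingleCrossing

variable {K g : ℝ → ℝ} {u m v : ℝ}

lemma setIntegral_pos_of_pos_on_Ioo {p q : ℝ} (hK : IntegrableOn K (Ioo u v))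
    (hK_nonneg : ∀ t ∈ Ioo u v, 0 ≤ K t) (hpq : p < q) (hsub : Ioo p q ⊆ Ioo u v)
    (hpos : ∀ t ∈ Ioo p q, 0 < K t) : 0 < ∫ t in Ioo u v, K t := by
  rw [setIntegral_pos_iff_support_of_nonneg_ae
    ((ae_restrict_iff' measurableSet_Ioo).2 (ae_of_all _ hK_nonneg)) hK]
  calc (0 : ENNReal) < volume (Ioo p q) := by simpa using hpq
    _ ≤ volume (Function.support K ∩ Ioo u v) :=
      measure_mono fun t ht => ⟨(hpos t ht).ne', hsub ht⟩

lemma AntitoneOn.eqOn_of_ae_eq {k : ℝ} (hg : AntitoneOn g (Ioo u v))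
    (h : ∀ᵐ t ∂volume.restrict (Ioo u v), g t = k) : ∀ t ∈ Ioo u v, g t = k := by
  have hex : ∀ {p q}, p < q → Ioo p q ⊆ Ioo u v → ∃ x ∈ Ioo p q, g x = k := by
    intro p q hpq hsub
    have := ae_restrict_neBot.2 ((Measure.measure_Ioo_pos volume).2 hpq).ne'
    exact ((ae_restrict_mem measurableSet_Ioo).and
      (ae_restrict_of_ae_restrict_of_subset hsub h)).exists
  intro t ht
  obtain ⟨x, hx, hgx⟩ := hex ht.1 (Ioo_subset_Ioo_right ht.2.le)
  obtain ⟨y, hy, hgy⟩ := hex ht.2 (Ioo_subset_Ioo_left ht.1.le)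
  have hxv : x ∈ Ioo u v := ⟨hx.1, hx.2.trans ht.2⟩
  have hyv : y ∈ Ioo u v := ⟨ht.1.trans hy.1, hy.2⟩
  exact le_antisymm (hgx ▸ hg hxv ht hx.2.le) (hgy ▸ hg ht hyv hy.1.le)

lemma mul_sub_nonneg_of_sign_change (hg : AntitoneOn g (Ioo u v)) (hm : m ∈ Ioo u v)
    (hpos : ∀ t ∈ Ioo u m, 0 < K t) (hneg : ∀ t ∈ Ioo m v, K t < 0) {t : ℝ}
    (ht : t ∈ Ioo u v) : 0 ≤ K t * (g t - g m) := by
  rcases lt_trichotomy t m with h | rfl | h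
  · exact mul_nonneg (hpos t ⟨ht.1, h⟩).le (sub_nonneg.2 (hg ht hm h.le))
  · simp
  · exact mul_nonneg_of_nonpos_of_nonpos (hneg t ⟨h, ht.2⟩).le (sub_nonpos.2 (hg hm ht h.le))

lemma setIntegral_mul_eq_setIntegral_mul_sub (hK : IntegrableOn K (Ioo u v))
    (hKg : IntegrableOn (fun t => K t * g t) (Ioo u v)) (hK0 : ∫ t in Ioo u v, K t = 0)
    (x : ℝ) : ∫ t in Ioo u v, K t * g t = ∫ t in Ioo u v, K t * (g t - g x) := by
  simp_rw [mul_sub]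
  rw [integral_sub hKg (hK.mul_const _), integral_mul_const, hK0, zero_mul, sub_zero]

theorem AntitoneOn.setIntegral_mul_nonneg_of_sign_change (hg : AntitoneOn g (Ioo u v))
    (hm : m ∈ Ioo u v) (hK : IntegrableOn K (Ioo u v))
    (hKg : IntegrableOn (fun t => K t * g t) (Ioo u v)) (hK0 : ∫ t in Ioo u v, K t = 0)
    (hpos : ∀ t ∈ Ioo u m, 0 < K t) (hneg : ∀ t ∈ Ioo m v, K t < 0) :
    0 ≤ ∫ t in Ioo u v, K t * g t := by
  rw [setIntegral_mul_eq_setIntegral_mul_sub hK hKg hK0 m]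
  exact setIntegral_nonneg measurableSet_Ioo fun t ht =>
    mul_sub_nonneg_of_sign_change hg hm hpos hneg ht

theorem AntitoneOn.eqOn_of_setIntegral_mul_eq_zero (hg : AntitoneOn g (Ioo u v))
    (hm : m ∈ Ioo u v) (hK : IntegrableOn K (Ioo u v))
    (hKg : IntegrableOn (fun t => K t * g t) (Ioo u v)) (hK0 : ∫ t in Ioo u v, K t = 0)
    (hpos : ∀ t ∈ Ioo u m, 0 < K t) (hneg : ∀ t ∈ Ioo m v, K t < 0)
    (h : ∫ t in Ioo u v, K t * g t = 0) : ∀ t ∈ Ioo u v, g t = g m := by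
  rw [setIntegral_mul_eq_setIntegral_mul_sub hK hKg hK0 m,
    setIntegral_eq_zero_iff_of_nonneg_ae
      ((ae_restrict_iff' measurableSet_Ioo).2 (ae_of_all _ fun t ht =>
        mul_sub_nonneg_of_sign_change hg hm hpos hneg ht))
      ((hKg.sub (hK.mul_const _)).congr_fun (fun t _ => (mul_sub _ _ _).symm) measurableSet_Ioo)]
    at h
  refine hg.eqOn_of_ae_eq ?_
  have hne : ∀ᵐ t ∂volume.restrict (Ioo u v), t ≠ m :=
    ae_restrict_of_ae (by simp [ae_iff, measure_singleton])
  filter_upwards [h, ae_restrict_mem measurableSet_Ioo, hne] with t hzero ht htm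
  have hKt : K t ≠ 0 := by
    rcases htm.lt_or_gt with hlt | hgt
    · exact (hpos t ⟨ht.1, hlt⟩).ne'
    · exact (hneg t ⟨hgt, ht.2⟩).ne
  exact sub_eq_zero.1 ((mul_eq_zero.1 hzero).resolve_left hKt)

lemma exists_mem_Ioo_sign_change_affine {α β x y : ℝ} (hxy : x < y) (hx : 0 < α - β * x)
    (hy : α - β * y < 0) :
    ∃ m ∈ Ioo x y, ∀ t, (t < m → 0 < α - β * t) ∧ (m < t → α - β * t < 0) := by
  have hβ : 0 < β := by nlinarith
  have key : ∀ t, α - β * t = β * (α / β - t) := fun t => by field_simp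
  refine ⟨α / β, ⟨?_, ?_⟩, fun t => ⟨fun ht => ?_, fun ht => ?_⟩⟩
  · nlinarith [key x]
  · nlinarith [key y]
  · rw [key]; exact mul_pos hβ (by linarith)
  · rw [key]; exact mul_neg_of_pos_of_neg hβ (by linarith)

end SingleCrossing

noncomputable def weight (a s t : ℝ) : ℝ := (uIoc a s).indicator (fun t => |s - t| / (1 - t)) t

section Weight

variable {a s t : ℝ}

lemma weight_of_mem_Ioc (ht : t ∈ Ioc a s) : weight a s t = (s - t) / (1 - t) := by
  rw [weight, indicator_of_mem (uIoc_of_le (ht.1.le.trans ht.2) ▸ ht),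
    abs_of_nonneg (sub_nonneg.2 ht.2)]

lemma weight_of_mem_Ioc_rev (ht : t ∈ Ioc s a) : weight a s t = (t - s) / (1 - t) := by
  rw [weight, indicator_of_mem (uIoc_of_ge (ht.1.le.trans ht.2) ▸ ht),
    abs_of_nonpos (sub_nonpos.2 ht.1.le), neg_sub]

lemma weight_of_le_min (ht : t ≤ min a s) : weight a s t = 0 :=
  indicator_of_notMem (fun h => (mem_Ioc.1 h).1.not_ge ht) _

lemma weight_of_max_lt (ht : max a s < t) : weight a s t = 0 :=
  indicator_of_notMem (fun h => (mem_Ioc.1 h).2.not_gt ht) _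

lemma weight_nonneg (ha : a ≤ 1) (hs : s ≤ 1) (t : ℝ) : 0 ≤ weight a s t := by
  refine indicator_nonneg (fun t ht => div_nonneg (abs_nonneg _) ?_) t
  linarith [ht.2, max_le ha hs]

lemma weight_pos (ht : t ∈ Ioo (min a s) (max a s)) (ht1 : t < 1) : 0 < weight a s t := by
  rw [weight, indicator_of_mem (show t ∈ uIoc a s from Ioo_subset_Ioc_self ht)]
  have hst : s ≠ t := by
    rintro rfl
    linarith [(min_lt_iff.1 ht.1).resolve_right (lt_irrefl s),
      (lt_max_iff.1 ht.2).resolve_right (lt_irrefl s)]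
  exact div_pos (abs_pos.2 (sub_ne_zero.2 hst)) (sub_pos.2 ht1)

lemma weight_le (ha : 0 ≤ a) (ha1 : a < 1) (hs : 0 ≤ s) (hs1 : s ≤ 1) (t : ℝ) :
    weight a s t ≤ 1 / (1 - a) := by
  have h1a : 0 < 1 - a := sub_pos.2 ha1
  refine indicator_apply_le' (fun ht => ?_) fun _ => by positivity
  obtain ⟨hmin, hmax⟩ : min a s < t ∧ t ≤ max a s := ht
  rcases le_or_gt t a with hta | hat
  · have hst : |s - t| ≤ 1 := abs_le.2 ⟨by linarith, by linarith [le_min ha hs]⟩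
    exact div_le_div₀ zero_le_one hst h1a (by linarith)
  · have hts : t ≤ s := by
      rcases le_total a s with h | h
      · rwa [max_eq_right h] at hmax
      · rw [max_eq_left h] at hmax; linarith
    calc |s - t| / (1 - t) ≤ 1 := by
          rw [abs_of_nonneg (sub_nonneg.2 hts)]
          exact div_le_one_of_le₀ (by linarith) (by linarith)
      _ ≤ 1 / (1 - a) := by rw [le_div_iff₀ h1a]; linarith

lemma measurable_weight : Measurable (weight a s) :=
  (by fun_prop : Measurable fun t : ℝ => |s - t| / (1 - t)).indicator measurableSet_uIoc

lemma integrableOn_weight_mul {f : ℝ → ℝ} (ha : 0 ≤ a) (ha1 : a < 1) (hs : 0 ≤ s)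
    (hs1 : s ≤ 1) (hf : IntegrableOn f (Ioo 0 1)) :
    IntegrableOn (fun t => weight a s t * f t) (Ioo 0 1) :=
  hf.bdd_mul measurable_weight.aestronglyMeasurable (c := 1 / (1 - a)) <| ae_of_all _ fun t => by
    rw [Real.norm_of_nonneg (weight_nonneg ha1.le hs1 t)]
    exact weight_le ha ha1 hs hs1 t

lemma intervalIntegral_eq_setIntegral_weight (f : ℝ → ℝ) {u v : ℝ} (hu : u ≤ min a s)
    (hv : max a s ≤ v) :
    ∫ t in a..s, (s - t) / (1 - t) * f t = ∫ t in Ioo u v, weight a s t * f t := by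
  simp_rw [← integral_Ioc_eq_integral_Ioo, weight, ← indicator_mul_left]
  rw [setIntegral_indicator measurableSet_uIoc,
    inter_eq_right.2 (show uIoc a s ⊆ Ioc u v from Ioc_subset_Ioc hu hv)]
  rcases le_total a s with h | h
  · rw [intervalIntegral.integral_of_le h, uIoc_of_le h]
    refine setIntegral_congr_fun measurableSet_Ioc fun t ht => ?_
    rw [abs_of_nonneg (sub_nonneg.2 ht.2)]
  · rw [intervalIntegral.integral_of_ge h, uIoc_of_ge h, ← integral_neg]
    refine setIntegral_congr_fun measurableSet_Ioc fun t ht => ?_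
    rw [abs_of_nonpos (sub_nonpos.2 ht.1.le)]
    ring

end Weight

lemma hasDerivAt_zeta {s t : ℝ} (ht : t < 1) : HasDerivAt (zeta s) ((s - t) / (1 - t)) t := by
  have h1t : 1 - t ≠ 0 := sub_ne_zero.2 ht.ne'
  have hlog := ((hasDerivAt_id' t).const_sub 1).log h1t
  refine ((hasDerivAt_id' t).add (hlog.const_mul (1 - s))).congr_deriv ?_
  field_simp
  ring

lemma intervalIntegral_eq_xi {a s : ℝ} (ha1 : a < 1) (hs1 : s ≤ 1) :
    ∫ t in a..s, (s - t) / (1 - t) = xi a s := by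
  rcases hs1.lt_or_eq with hs1 | rfl
  · have hlt : ∀ t ∈ uIcc a s, t < 1 := fun t ht => ht.2.trans_lt (max_lt ha1 hs1)
    rw [xi, intervalIntegral.integral_eq_sub_of_hasDerivAt fun t ht => hasDerivAt_zeta (hlt t ht)]
    exact ContinuousOn.intervalIntegrable fun t ht =>
      ((continuousAt_const.sub continuousAt_id).div (continuousAt_const.sub continuousAt_id)
        (sub_ne_zero.2 (hlt t ht).ne')).continuousWithinAt
  · have hae : ∀ᵐ t : ℝ, t ≠ 1 := by simp [ae_iff, measure_singleton]
    rw [intervalIntegral.integral_congr_ae (g := fun _ => 1)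
      (hae.mono fun t ht _ => div_self (sub_ne_zero.2 ht.symm))]
    simp [xi, zeta]

noncomputable def weightedIntegral (a s : ℝ) (f : ℝ → ℝ) : ℝ :=
  ∫ t in a..s, (s - t) / (1 - t) * f t

section WeightedIntegral

variable {a s : ℝ} {f : ℝ → ℝ}

lemma weightedIntegral_one (ha1 : a < 1) (hs1 : s ≤ 1) :
    weightedIntegral a s (fun _ => 1) = xi a s := by
  simp only [weightedIntegral, mul_one]
  exact intervalIntegral_eq_xi ha1 hs1

lemma weightedIntegral_pos (ha : 0 ≤ a) (ha1 : a < 1) (hs : 0 ≤ s) (hs1 : s ≤ 1)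
    (hne : a ≠ s) (hf : IntegrableOn f (Ioo 0 1)) (hfpos : ∀ t ∈ Ioo 0 1, 0 < f t) :
    0 < weightedIntegral a s f := by
  have hsub : Ioo (min a s) (max a s) ⊆ Ioo 0 1 :=
    Ioo_subset_Ioo (le_min ha hs) (max_le ha1.le hs1)
  rw [weightedIntegral,
    intervalIntegral_eq_setIntegral_weight f (le_min ha hs) (max_le ha1.le hs1)]
  exact setIntegral_pos_of_pos_on_Ioo (integrableOn_weight_mul ha ha1 hs hs1 hf)
    (fun t ht => mul_nonneg (weight_nonneg ha1.le hs1 t) (hfpos t ht).le) (min_lt_max.2 hne)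
    hsub fun t ht => mul_pos (weight_pos ht (hsub ht).2) (hfpos t (hsub ht))

lemma xi_pos_s12 (ha : 0 ≤ a) (ha1 : a < 1) (hs : 0 ≤ s) (hs1 : s ≤ 1) (hne : a ≠ s) :
    0 < xi a s :=
  weightedIntegral_one ha1 hs1 ▸ weightedIntegral_pos ha ha1 hs hs1 hne
    (integrableOn_const measure_Ioo_lt_top.ne) fun _ _ => one_pos

lemma Fg_eq (g : ℝ → ℝ) (r a b c : ℝ) :
    Fg g r a b c = r * weightedIntegral a c g - weightedIntegral a b g := by
  rw [Fg, weightedIntegral, weightedIntegral, intervalIntegral.integral_symm a b,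
    intervalIntegral.integral_symm a c]
  ring

end WeightedIntegral

noncomputable def crossKernel (a b c t : ℝ) : ℝ := xi a b * weight a c t - xi a c * weight a b t

section CrossKernel

variable {a b c : ℝ} {f : ℝ → ℝ}

lemma integrableOn_crossKernel_mul (ha : 0 ≤ a) (ha1 : a < 1) (hc : 0 ≤ c) (hcb : c < b)
    (hb : b ≤ 1) (hf : IntegrableOn f (Ioo 0 1)) :
    IntegrableOn (fun t => crossKernel a b c t * f t) (Ioo (min a c) (max a b)) := by
  have hc1 : c < 1 := hcb.trans_le hb
  have h : IntegrableOn (fun t => xi a b * (weight a c t * f t) - xi a c * (weight a b t * f t))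
      (Ioo 0 1) :=
    ((integrableOn_weight_mul ha ha1 hc hc1.le hf).const_mul _).sub
      ((integrableOn_weight_mul ha ha1 (hc.trans hcb.le) hb hf).const_mul _)
  refine (h.mono_set (Ioo_subset_Ioo (le_min ha hc) (max_le ha1.le hb))).congr_fun
    (fun t _ => ?_) measurableSet_Ioo
  simp only [crossKernel]
  ring

lemma setIntegral_crossKernel_mul (ha : 0 ≤ a) (ha1 : a < 1) (hc : 0 ≤ c) (hcb : c < b)
    (hb : b ≤ 1) (hf : IntegrableOn f (Ioo 0 1)) :
    ∫ t in Ioo (min a c) (max a b), crossKernel a b c t * f t =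
      xi a b * weightedIntegral a c f - xi a c * weightedIntegral a b f := by
  have hc1 : c < 1 := hcb.trans_le hb
  have hsub : Ioo (min a c) (max a b) ⊆ Ioo 0 1 :=
    Ioo_subset_Ioo (le_min ha hc) (max_le ha1.le hb)
  rw [weightedIntegral, weightedIntegral,
    intervalIntegral_eq_setIntegral_weight f le_rfl (max_le_max le_rfl hcb.le),
    intervalIntegral_eq_setIntegral_weight f (min_le_min le_rfl hcb.le) le_rfl,
    ← integral_const_mul, ← integral_const_mul, ← integral_sub
      (((integrableOn_weight_mul ha ha1 hc hc1.le hf).mono_set hsub).const_mul _)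
      (((integrableOn_weight_mul ha ha1 (hc.trans hcb.le) hb hf).mono_set hsub).const_mul _)]
  refine setIntegral_congr_fun measurableSet_Ioo fun t _ => ?_
  simp only [crossKernel]
  ring

lemma integrableOn_crossKernel (ha : 0 ≤ a) (ha1 : a < 1) (hc : 0 ≤ c) (hcb : c < b)
    (hb : b ≤ 1) : IntegrableOn (crossKernel a b c) (Ioo (min a c) (max a b)) := by
  simpa using integrableOn_crossKernel_mul ha ha1 hc hcb hb
    (integrableOn_const (C := (1 : ℝ)) measure_Ioo_lt_top.ne)

lemma setIntegral_crossKernel (ha : 0 ≤ a) (ha1 : a < 1) (hc : 0 ≤ c) (hcb : c < b)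
    (hb : b ≤ 1) : ∫ t in Ioo (min a c) (max a b), crossKernel a b c t = 0 := by
  have h := setIntegral_crossKernel_mul ha ha1 hc hcb hb
    (integrableOn_const (C := (1 : ℝ)) measure_Ioo_lt_top.ne)
  simp only [mul_one] at h
  rw [h, weightedIntegral_one ha1 (hcb.trans_le hb).le, weightedIntegral_one ha1 hb]
  ring

lemma crossKernel_sign_change_of_c_lt_a_lt_b (hc : 0 ≤ c) (hca : c < a) (hab : a < b)
    (hb : b ≤ 1) :
    (∀ t ∈ Ioo c a, 0 < crossKernel a b c t) ∧
      ∀ t ∈ Ioo a b, crossKernel a b c t < 0 := by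
  have ha1 : a < 1 := hab.trans_le hb
  have hxb := xi_pos_s12 (hc.trans hca.le) ha1 (hc.trans (hca.trans hab).le) hb hab.ne
  have hxc := xi_pos_s12 (hc.trans hca.le) ha1 hc (hca.trans ha1).le hca.ne'
  refine ⟨fun t ht => ?_, fun t ht => ?_⟩
  · rw [crossKernel, weight_of_mem_Ioc_rev ⟨ht.1, ht.2.le⟩,
      weight_of_le_min (le_min ht.2.le (ht.2.trans hab).le), mul_zero, sub_zero]
    exact mul_pos hxb (div_pos (by linarith [ht.1]) (by linarith [ht.2]))
  · rw [crossKernel, weight_of_max_lt (max_lt ht.1 (hca.trans ht.1)),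
      weight_of_mem_Ioc ⟨ht.1, ht.2.le⟩, mul_zero, zero_sub, neg_lt_zero]
    exact mul_pos hxc (div_pos (by linarith [ht.2]) (by linarith [ht.2]))

lemma crossKernel_sign_change_of_a_lt_c (ha : 0 ≤ a) (hac : a < c) (hcb : c < b) (hb : b ≤ 1) :
    ∃ m ∈ Ioo a b, (∀ t ∈ Ioo a m, 0 < crossKernel a b c t) ∧
      ∀ t ∈ Ioo m b, crossKernel a b c t < 0 := by
  have hc1 : c < 1 := hcb.trans_le hb
  have hxc := xi_pos_s12 ha (hac.trans hc1) (ha.trans hac.le) hc1.le hac.ne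
  have hK := integrableOn_crossKernel ha (hac.trans hc1) (ha.trans hac.le) hcb hb
  have hK0 := setIntegral_crossKernel ha (hac.trans hc1) (ha.trans hac.le) hcb hb
  rw [min_eq_left hac.le, max_eq_right (hac.trans hcb).le] at hK hK0
  set α := xi a b * c - xi a c * b
  set β := xi a b - xi a c
  have hleft : ∀ t ∈ Ioc a c, crossKernel a b c t = (α - β * t) / (1 - t) := fun t ht => by
    rw [crossKernel, weight_of_mem_Ioc ht, weight_of_mem_Ioc ⟨ht.1, ht.2.trans hcb.le⟩]
    ring
  have hright : ∀ t ∈ Ioo c b, crossKernel a b c t < 0 := fun t ht => by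
    rw [crossKernel, weight_of_max_lt (max_lt (hac.trans ht.1) ht.1),
      weight_of_mem_Ioc ⟨hac.trans ht.1, ht.2.le⟩, mul_zero, zero_sub, neg_lt_zero]
    exact mul_pos hxc (div_pos (by linarith [ht.2]) (by linarith [ht.2]))
  have hαc : α - β * c < 0 := by nlinarith
  -- `∫ K = 0` rules out `K ≤ 0` on all of `(a, b)`
  have hαa : 0 < α - β * a := by
    by_contra! h
    have hnonneg : ∀ t ∈ Ioo a b, 0 ≤ -crossKernel a b c t := fun t ht => by
      rcases le_or_gt t c with htc | htc
      · rw [hleft t ⟨ht.1, htc⟩, neg_nonneg]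
        refine div_nonpos_of_nonpos_of_nonneg ?_ (by linarith)
        rcases le_total 0 β with hβ | hβ <;> nlinarith [ht.1]
      · exact neg_nonneg.2 (hright t ⟨htc, ht.2⟩).le
    have := setIntegral_pos_of_pos_on_Ioo hK.neg hnonneg hcb (Ioo_subset_Ioo_left hac.le)
      fun t ht => neg_pos.2 (hright t ht)
    simp only [Pi.neg_apply, integral_neg, hK0, neg_zero, lt_irrefl] at this
  obtain ⟨m, hm, hsign⟩ := exists_mem_Ioo_sign_change_affine hac hαa hαc
  refine ⟨m, ⟨hm.1, hm.2.trans hcb⟩, fun t ht => ?_, fun t ht => ?_⟩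
  · rw [hleft t ⟨ht.1, (ht.2.trans hm.2).le⟩]
    exact div_pos ((hsign t).1 ht.2) (by linarith [ht.2.trans hm.2])
  · rcases le_or_gt t c with htc | htc
    · rw [hleft t ⟨hm.1.trans ht.1, htc⟩]
      exact div_neg_of_neg_of_pos ((hsign t).2 ht.1) (by linarith)
    · exact hright t ⟨htc, ht.2⟩

lemma crossKernel_sign_change_of_b_lt_a (hc : 0 ≤ c) (hcb : c < b) (hba : b < a)
    (ha1 : a < 1) :
    ∃ m ∈ Ioo c a, (∀ t ∈ Ioo c m, 0 < crossKernel a b c t) ∧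
      ∀ t ∈ Ioo m a, crossKernel a b c t < 0 := by
  have ha : 0 ≤ a := hc.trans (hcb.trans hba).le
  have hb1 : b < 1 := hba.trans ha1
  have hxb := xi_pos_s12 ha ha1 (hc.trans hcb.le) hb1.le hba.ne'
  have hK := integrableOn_crossKernel ha ha1 hc hcb hb1.le
  have hK0 := setIntegral_crossKernel ha ha1 hc hcb hb1.le
  rw [min_eq_right (hcb.trans hba).le, max_eq_left hba.le] at hK hK0
  set α := xi a c * b - xi a b * c
  set β := xi a c - xi a b
  have hleft : ∀ t ∈ Ioc c b, 0 < crossKernel a b c t := fun t ht => by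
    rw [crossKernel, weight_of_mem_Ioc_rev ⟨ht.1, ht.2.trans hba.le⟩,
      weight_of_le_min (le_min (ht.2.trans hba.le) ht.2), mul_zero, sub_zero]
    exact mul_pos hxb (div_pos (by linarith [ht.1]) (by linarith [ht.2]))
  have hright : ∀ t ∈ Ioc b a, crossKernel a b c t = (α - β * t) / (1 - t) := fun t ht => by
    rw [crossKernel, weight_of_mem_Ioc_rev ⟨hcb.trans ht.1, ht.2⟩, weight_of_mem_Ioc_rev ht]
    ring
  have hαb : 0 < α - β * b := by nlinarith
  -- `∫ K = 0` rules out `K ≥ 0` on all of `(c, a)`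
  have hαa : α - β * a < 0 := by
    by_contra! h
    have hnonneg : ∀ t ∈ Ioo c a, 0 ≤ crossKernel a b c t := fun t ht => by
      rcases le_or_gt t b with htb | htb
      · exact (hleft t ⟨ht.1, htb⟩).le
      · rw [hright t ⟨htb, ht.2.le⟩]
        refine div_nonneg ?_ (by linarith [ht.2])
        rcases le_total 0 β with hβ | hβ <;> nlinarith [ht.2]
    have := setIntegral_pos_of_pos_on_Ioo hK hnonneg hcb (Ioo_subset_Ioo_right hba.le)
      fun t ht => hleft t ⟨ht.1, ht.2.le⟩
    rw [hK0] at this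
    exact lt_irrefl 0 this
  obtain ⟨m, hm, hsign⟩ := exists_mem_Ioo_sign_change_affine hba hαb hαa
  refine ⟨m, ⟨hcb.trans hm.1, hm.2⟩, fun t ht => ?_, fun t ht => ?_⟩
  · rcases le_or_gt t b with htb | htb
    · exact hleft t ⟨ht.1, htb⟩
    · rw [hright t ⟨htb, (ht.2.trans hm.2).le⟩]
      exact div_pos ((hsign t).1 ht.2) (by linarith [ht.2.trans hm.2])
  · rw [hright t ⟨hm.1.trans ht.1, ht.2.le⟩]
    exact div_neg_of_neg_of_pos ((hsign t).2 ht.1) (by linarith [ht.2])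

lemma exists_crossKernel_sign_change (ha : 0 ≤ a) (ha1 : a < 1) (hc : 0 ≤ c) (hcb : c < b)
    (hb : b ≤ 1) (hab : a ≠ b) (hac : a ≠ c) :
    ∃ m ∈ Ioo (min a c) (max a b), (∀ t ∈ Ioo (min a c) m, 0 < crossKernel a b c t) ∧
      ∀ t ∈ Ioo m (max a b), crossKernel a b c t < 0 := by
  rcases hac.lt_or_gt with hac | hca
  · rw [min_eq_left hac.le, max_eq_right (hac.trans hcb).le]
    exact crossKernel_sign_change_of_a_lt_c ha hac hcb hb
  rw [min_eq_right hca.le]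
  rcases hab.lt_or_gt with hab | hba
  · rw [max_eq_right hab.le]
    exact ⟨a, ⟨hca, hab⟩, crossKernel_sign_change_of_c_lt_a_lt_b hc hca hab hb⟩
  · rw [max_eq_left hba.le]
    exact crossKernel_sign_change_of_b_lt_a hc hcb hba ha1

variable {g : ℝ → ℝ}

lemma setIntegral_crossKernel_mul_nonneg (ha : 0 ≤ a) (ha1 : a < 1) (hc : 0 ≤ c)
    (hcb : c < b) (hb : b ≤ 1) (hab : a ≠ b) (hac : a ≠ c) (hgm : AntitoneOn g (Ioo 0 1))
    (hg : IntegrableOn g (Ioo 0 1)) :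
    0 ≤ ∫ t in Ioo (min a c) (max a b), crossKernel a b c t * g t := by
  obtain ⟨m, hm, hpos, hneg⟩ := exists_crossKernel_sign_change ha ha1 hc hcb hb hab hac
  exact (hgm.mono (Ioo_subset_Ioo (le_min ha hc) (max_le ha1.le hb))
    ).setIntegral_mul_nonneg_of_sign_change hm (integrableOn_crossKernel ha ha1 hc hcb hb)
    (integrableOn_crossKernel_mul ha ha1 hc hcb hb hg) (setIntegral_crossKernel ha ha1 hc hcb hb)
    hpos hneg

lemma setIntegral_crossKernel_mul_eq_zero_iff (ha : 0 ≤ a) (ha1 : a < 1) (hc : 0 ≤ c)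
    (hcb : c < b) (hb : b ≤ 1) (hab : a ≠ b) (hac : a ≠ c) (hgm : AntitoneOn g (Ioo 0 1))
    (hg : IntegrableOn g (Ioo 0 1)) :
    ∫ t in Ioo (min a c) (max a b), crossKernel a b c t * g t = 0 ↔
      ∃ k, ∀ t ∈ Ioo (min a c) (max a b), g t = k := by
  constructor
  · intro h
    obtain ⟨m, hm, hpos, hneg⟩ := exists_crossKernel_sign_change ha ha1 hc hcb hb hab hac
    exact ⟨g m, (hgm.mono (Ioo_subset_Ioo (le_min ha hc) (max_le ha1.le hb))
      ).eqOn_of_setIntegral_mul_eq_zero hm (integrableOn_crossKernel ha ha1 hc hcb hb)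
      (integrableOn_crossKernel_mul ha ha1 hc hcb hb hg)
      (setIntegral_crossKernel ha ha1 hc hcb hb) hpos hneg h⟩
  · rintro ⟨k, hk⟩
    rw [setIntegral_congr_fun measurableSet_Ioo fun t ht => by rw [hk t ht], integral_mul_const,
      setIntegral_crossKernel ha ha1 hc hcb hb, zero_mul]

end CrossKernel

theorem stmt12_general (g : ℝ → ℝ)
    (hgpos : ∀ t ∈ Set.Ioo (0:ℝ) 1, 0 < g t)
    (hgb : ∃ M, ∀ t ∈ Set.Ioo (0:ℝ) 1, g t ≤ M)
    (hgm : AntitoneOn g (Set.Ioo 0 1))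
    (a b c : ℝ) (ha : 0 ≤ a) (ha1 : a < 1) (hc : 0 ≤ c) (hcb : c < b) (hb : b ≤ 1)
    (hab : a ≠ b) (hac : a ≠ c) :
    (∃! q : ℝ, 0 < q ∧ Fg g q a b c = 0) ∧
    Fg (fun _ => 1) (rho a b c) a b c = 0 ∧
    (∀ q : ℝ, 0 < q → Fg g q a b c = 0 →
      q ≤ rho a b c ∧
      (q = rho a b c ↔ ∃ k : ℝ, ∀ t ∈ Set.Ioo (min a c) (max a b), g t = k)) := by
  have hc1 : c < 1 := hcb.trans_le hb
  obtain ⟨M, hM⟩ := hgb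
  have hg : IntegrableOn g (Ioo 0 1) :=
    Integrable.of_bound
      (aemeasurable_restrict_of_antitoneOn measurableSet_Ioo hgm).aestronglyMeasurable M
      ((ae_restrict_iff' measurableSet_Ioo).2 (ae_of_all _ fun t ht => by
        rw [Real.norm_of_nonneg (hgpos t ht).le]; exact hM t ht))
  have hJb := weightedIntegral_pos ha ha1 (hc.trans hcb.le) hb hab hg hgpos
  have hJc := weightedIntegral_pos ha ha1 hc hc1.le hac hg hgpos
  have hxc := xi_pos_s12 ha ha1 hc hc1.le hac
  have hF : ∀ r, Fg g r a b c = 0 ↔ r = weightedIntegral a b g / weightedIntegral a c g :=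
    fun r => by rw [Fg_eq, sub_eq_zero, eq_div_iff hJc.ne']
  have hnonneg := setIntegral_crossKernel_mul_nonneg ha ha1 hc hcb hb hab hac hgm hg
  have hzero := setIntegral_crossKernel_mul_eq_zero_iff ha ha1 hc hcb hb hab hac hgm hg
  rw [setIntegral_crossKernel_mul ha ha1 hc hcb hb hg] at hnonneg hzero
  refine ⟨⟨_, ⟨div_pos hJb hJc, (hF _).2 rfl⟩, fun r hr => (hF r).1 hr.2⟩, ?_,
    fun q _ hq => ?_⟩
  · rw [Fg_eq, weightedIntegral_one ha1 hb, weightedIntegral_one ha1 hc1.le, rho, if_pos ha1,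
      div_mul_cancel₀ _ hxc.ne', sub_self]
  · rw [(hF q).1 hq, rho, if_pos ha1, div_le_div_iff₀ hJc hxc, div_eq_div_iff hJc.ne' hxc.ne',
      ← hzero]
    exact ⟨by linarith, by constructor <;> intro h <;> linarith⟩

theorem stmt12 (g : ℝ → ℝ)
    (hgpos : ∀ t ∈ Set.Ioo (0:ℝ) 1, 0 < g t)
    (hgb : ∃ M, ∀ t ∈ Set.Ioo (0:ℝ) 1, g t ≤ M)
    (hgc : ContinuousOn g (Set.Ioo 0 1))
    (hgm : AntitoneOn g (Set.Ioo 0 1))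
    (a b c : ℝ) (ha : 0 ≤ a) (ha1 : a < 1) (hc : 0 ≤ c) (hcb : c < b) (hb : b ≤ 1)
    (hab : a ≠ b) (hac : a ≠ c) :
    (∃! q : ℝ, 0 < q ∧ Fg g q a b c = 0) ∧
    Fg (fun _ => 1) (rho a b c) a b c = 0 ∧
    (∀ q : ℝ, 0 < q → Fg g q a b c = 0 →
      q ≤ rho a b c ∧
      (q = rho a b c ↔ ∃ k : ℝ, ∀ t ∈ Set.Ioo (min a c) (max a b), g t = k)) :=
  stmt12_general g hgpos hgb hgm a b c ha ha1 hc hcb hb hab hac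
end

section
/- Fix 0 ≤ a ≤ 1, 0 ≤ c < b ≤ 1 with a ≠ b, a ≠ c. Over all pairs (α,β) of probability distributions on a finite set such that D(z(b)‖z(a)) and D(z(c)‖z(a)) are finite and positive (where z(t) = tα + (1-t)β), the supremum of D(z(b)‖z(a))/D(z(c)‖z(a)) equals ρ(a,b,c). -/
noncomputable def KL {n : ℕ} (p q : Fin n → ℝ) : ℝ :=
  ∑ i, p i * Real.log (p i / q i)

/-!
Write `z(t) = t α + (1 - t) β`. Coordinatewise, `D(z(t) ‖ z(a)) = ∑ᵢ zᵢ(a) klFun (zᵢ(t) / zᵢ(a))`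
and `ξ_a(t) = (1 - a) klFun ((1 - t) / (1 - a))`, so the upper bound can be proved one coordinate
at a time. In the variable `r = t - a` both `klFun (1 + s r)` and `klFun (1 + σ r)` vanish to
second order at `r = 0`, and the ratio of their second derivatives, `s² (1 + σ r) / (σ² (1 + s r))`,
is antitone as soon as `σ ≤ s`. Two applications of the monotone form of l'Hôpital's rule then
show that the ratio of the functions is antitone. For `a = 1` the denominator `1 - t` is linear
and the statement is the monotonicity of the secant slopes of a convex function.

The supremum is approached by two-point distributions: `α = (0, 1)`, `β = (q, 1 - q)` with
`q → 0` when `a < 1` (then `D(z(t) ‖ z(a)) = q ξ_a(t) + O(q²)`), and `α = (e, 1 - e)`, `β = (1, 0)`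
with `e → 0` when `a = 1` (then `D(z(t) ‖ z(1)) = (1 - t) log (1 / e) + O(1)`).
-/

open Real Set Filter Topology InformationTheory

section MonotoneLHopital

variable {f g f' g' : ℝ → ℝ} {a b : ℝ}

theorem exists_mem_Ioo_div_eq_deriv_div (hab : a < b)
    (hf : ContinuousOn f (Icc a b)) (hg : ContinuousOn g (Icc a b))
    (hff' : ∀ x ∈ Ioo a b, HasDerivAt f (f' x) x) (hgg' : ∀ x ∈ Ioo a b, HasDerivAt g (g' x) x)
    (hg' : ∀ x ∈ Ioo a b, g' x ≠ 0) :
    ∃ c ∈ Ioo a b, (f b - f a) / (g b - g a) = f' c / g' c := by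
  have hgab : g b - g a ≠ 0 := fun h => by
    obtain ⟨c, hc, hc0⟩ := exists_hasDerivAt_eq_zero hab hg (sub_eq_zero.1 h).symm hgg'
    exact hg' c hc hc0
  obtain ⟨c, hc, h⟩ := exists_ratio_hasDerivAt_eq_ratio_slope f f' hab hf hff' g g' hg hgg'
  exact ⟨c, hc, by rw [div_eq_div_iff hgab (hg' c hc)]; linarith⟩

theorem antitoneOn_div_Ioc_of_deriv_pos (hf : ContinuousOn f (Icc a b))
    (hg : ContinuousOn g (Icc a b)) (hff' : ∀ x ∈ Ioo a b, HasDerivAt f (f' x) x)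
    (hgg' : ∀ x ∈ Ioo a b, HasDerivAt g (g' x) x) (hg' : ∀ x ∈ Ioo a b, 0 < g' x)
    (hfa : f a = 0) (hga : g a = 0) (hmono : AntitoneOn (fun x => f' x / g' x) (Ioo a b)) :
    AntitoneOn (fun x => f x / g x) (Ioc a b) := by
  have hgmono : StrictMonoOn g (Icc a b) :=
    strictMonoOn_of_hasDerivWithinAt_pos (convex_Icc a b) hg
      (fun x hx => (hgg' x (by rwa [interior_Icc] at hx)).hasDerivWithinAt)
      (fun x hx => hg' x (by rwa [interior_Icc] at hx))
  intro x hx y hy hxy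
  rcases hxy.eq_or_lt with rfl | hxy
  · rfl
  have hab : a < b := hx.1.trans_le hx.2
  have hgx : 0 < g x :=
    hga ▸ hgmono (left_mem_Icc.2 hab.le) (Ioc_subset_Icc_self hx) hx.1
  have hgxy : g x < g y := hgmono (Ioc_subset_Icc_self hx) (Ioc_subset_Icc_self hy) hxy
  obtain ⟨ξ, hξ, hfx⟩ := exists_mem_Ioo_div_eq_deriv_div hx.1
    (hf.mono (Icc_subset_Icc_right hx.2)) (hg.mono (Icc_subset_Icc_right hx.2))
    (fun z hz => hff' z (Ioo_subset_Ioo_right hx.2 hz)) (fun z hz => hgg' z (Ioo_subset_Ioo_right hx.2 hz))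
    (fun z hz => (hg' z (Ioo_subset_Ioo_right hx.2 hz)).ne')
  obtain ⟨η, hη, hfxy⟩ := exists_mem_Ioo_div_eq_deriv_div hxy
    (hf.mono (Icc_subset_Icc hx.1.le hy.2)) (hg.mono (Icc_subset_Icc hx.1.le hy.2))
    (fun z hz => hff' z (Ioo_subset_Ioo hx.1.le hy.2 hz)) (fun z hz => hgg' z (Ioo_subset_Ioo hx.1.le hy.2 hz))
    (fun z hz => (hg' z (Ioo_subset_Ioo hx.1.le hy.2 hz)).ne')
  rw [hfa, hga, sub_zero, sub_zero] at hfx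
  have hslope : (f y - f x) / (g y - g x) ≤ f x / g x := by
    rw [hfxy, hfx]
    exact hmono ⟨hξ.1, hξ.2.trans (hxy.trans_le hy.2)⟩ ⟨hx.1.trans hη.1, hη.2.trans_le hy.2⟩
      (hξ.2.trans hη.1).le
  rw [div_le_iff₀ (sub_pos.2 hgxy)] at hslope
  have hfx' : f x = f x / g x * g x := by field_simp
  rw [div_le_iff₀ (hgx.trans hgxy)]
  linarith

theorem antitoneOn_div_Ioc (hf : ContinuousOn f (Icc a b))
    (hg : ContinuousOn g (Icc a b)) (hff' : ∀ x ∈ Ioo a b, HasDerivAt f (f' x) x)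
    (hgg' : ∀ x ∈ Ioo a b, HasDerivAt g (g' x) x) (hg' : ∀ x ∈ Ioo a b, g' x ≠ 0)
    (hfa : f a = 0) (hga : g a = 0) (hmono : AntitoneOn (fun x => f' x / g' x) (Ioo a b)) :
    AntitoneOn (fun x => f x / g x) (Ioc a b) := by
  rcases hasDerivWithinAt_forall_lt_or_forall_gt_of_forall_ne (convex_Ioo a b)
    (fun x hx => (hgg' x hx).hasDerivWithinAt) hg' with hneg | hpos
  · simpa only [Pi.neg_apply, neg_div_neg_eq] using antitoneOn_div_Ioc_of_deriv_pos hf.neg hg.neg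
      (fun x hx => (hff' x hx).neg) (fun x hx => (hgg' x hx).neg)
      (fun x hx => neg_pos.2 (hneg x hx)) (by simp [hfa]) (by simp [hga])
      (by simpa only [neg_div_neg_eq] using hmono)
  · exact antitoneOn_div_Ioc_of_deriv_pos hf hg hff' hgg' hpos hfa hga hmono

theorem antitoneOn_div_Ico (hf : ContinuousOn f (Icc b a))
    (hg : ContinuousOn g (Icc b a)) (hff' : ∀ x ∈ Ioo b a, HasDerivAt f (f' x) x)
    (hgg' : ∀ x ∈ Ioo b a, HasDerivAt g (g' x) x) (hg' : ∀ x ∈ Ioo b a, g' x ≠ 0)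
    (hfa : f a = 0) (hga : g a = 0) (hmono : AntitoneOn (fun x => f' x / g' x) (Ioo b a)) :
    AntitoneOn (fun x => f x / g x) (Ico b a) := by
  have hneg : ∀ {p q : ℝ}, MapsTo Neg.neg (Icc (-p) (-q)) (Icc q p) := fun hx =>
    ⟨le_neg.1 hx.2, neg_le.1 hx.1⟩
  have hneg' : ∀ {p q x : ℝ}, x ∈ Ioo (-p) (-q) → -x ∈ Ioo q p := fun hx =>
    ⟨lt_neg.1 hx.2, neg_lt.1 hx.1⟩
  -- reflect through `x ↦ -x` and negate `f`, so that the ratio of derivatives is still antitone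
  have key := antitoneOn_div_Ioc (a := -a) (b := -b) (f := fun x => -f (-x))
    (g := fun x => g (-x)) (f' := fun x => f' (-x)) (g' := fun x => -g' (-x))
    (hf.comp continuous_neg.continuousOn hneg).neg (hg.comp continuous_neg.continuousOn hneg)
    (fun x hx => ((hff' (-x) (hneg' hx)).comp x (hasDerivAt_neg x)).neg.congr_deriv (by simp))
    (fun x hx => ((hgg' (-x) (hneg' hx)).comp x (hasDerivAt_neg x)).congr_deriv (by simp))
    (fun x hx => neg_ne_zero.2 (hg' (-x) (hneg' hx))) (by simp [hfa]) (by simp [hga])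
    (fun x hx y hy hxy => by
      simpa only [div_neg, neg_le_neg_iff] using hmono (hneg' hy) (hneg' hx) (neg_le_neg hxy))
  intro x hx y hy hxy
  have := key (show -y ∈ Ioc (-a) (-b) from ⟨neg_lt_neg hy.2, neg_le_neg hy.1⟩)
    (show -x ∈ Ioc (-a) (-b) from ⟨neg_lt_neg hx.2, neg_le_neg hx.1⟩) (neg_le_neg hxy)
  simp only [neg_neg, neg_div, neg_le_neg_iff] at this
  exact this

theorem antitoneOn_div_of_antitoneOn_deriv_div {S : Set ℝ} (hS : Convex ℝ S) (ha : a ∈ S)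
    (hf : ContinuousOn f S) (hg : ContinuousOn g S)
    (hff' : ∀ x ∈ interior S \ {a}, HasDerivAt f (f' x) x)
    (hgg' : ∀ x ∈ interior S \ {a}, HasDerivAt g (g' x) x)
    (hg' : ∀ x ∈ interior S \ {a}, g' x ≠ 0) (hfa : f a = 0) (hga : g a = 0)
    (hmono : AntitoneOn (fun x => f' x / g' x) (interior S \ {a})) :
    AntitoneOn (fun x => f x / g x) (S \ {a}) := by
  have hIcc : ∀ {p q}, p ∈ S → q ∈ S → Icc p q ⊆ S := fun hp hq => hS.ordConnected.out hp hq
  have hIoo : ∀ {p q}, p ∈ S → q ∈ S → a ∉ Ioo p q → Ioo p q ⊆ interior S \ {a} :=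
    fun hp hq haI z hz => ⟨interior_mono (hIcc hp hq) (by rwa [interior_Icc]),
      fun hza => haI (hza ▸ hz)⟩
  have hratio : ∀ {p q}, p ∈ S → q ∈ S → p < q → a ∉ Ioo p q →
      ∃ c ∈ Ioo p q, (f q - f p) / (g q - g p) = f' c / g' c := fun hp hq hpq haI =>
    exists_mem_Ioo_div_eq_deriv_div hpq (hf.mono (hIcc hp hq)) (hg.mono (hIcc hp hq))
      (fun z hz => hff' z (hIoo hp hq haI hz)) (fun z hz => hgg' z (hIoo hp hq haI hz))
      (fun z hz => hg' z (hIoo hp hq haI hz))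
  rintro x ⟨hxS, hxa⟩ y ⟨hyS, hya⟩ hxy
  rcases lt_or_gt_of_ne hxa with hxa | hxa <;> rcases lt_or_gt_of_ne hya with hya | hya
  · have haI : a ∉ Ioo x a := fun h => lt_irrefl a h.2
    exact antitoneOn_div_Ico (hf.mono (hIcc hxS ha)) (hg.mono (hIcc hxS ha))
      (fun z hz => hff' z (hIoo hxS ha haI hz)) (fun z hz => hgg' z (hIoo hxS ha haI hz))
      (fun z hz => hg' z (hIoo hxS ha haI hz)) hfa hga (hmono.mono (hIoo hxS ha haI))
      ⟨le_rfl, hxa⟩ ⟨hxy, hya⟩ hxy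
  · obtain ⟨ξ, hξ, hfx⟩ := hratio hxS ha hxa (fun h => (lt_irrefl a) h.2)
    obtain ⟨η, hη, hfy⟩ := hratio ha hyS hya (fun h => (lt_irrefl a) h.1)
    rw [hfa, hga, zero_sub, zero_sub, neg_div_neg_eq] at hfx
    rw [hfa, hga, sub_zero, sub_zero] at hfy
    simp only
    rw [hfx, hfy]
    exact hmono (hIoo hxS ha (fun h => lt_irrefl a h.2) hξ)
      (hIoo ha hyS (fun h => lt_irrefl a h.1) hη) (hξ.2.trans hη.1).le
  · exact absurd (hxy.trans_lt hya) (not_lt.2 hxa.le)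
  · have haI : a ∉ Ioo a y := fun h => lt_irrefl a h.1
    exact antitoneOn_div_Ioc (hf.mono (hIcc ha hyS)) (hg.mono (hIcc ha hyS))
      (fun z hz => hff' z (hIoo ha hyS haI hz)) (fun z hz => hgg' z (hIoo ha hyS haI hz))
      (fun z hz => hg' z (hIoo ha hyS haI hz)) hfa hga (hmono.mono (hIoo ha hyS haI))
      ⟨hxa, hxy⟩ ⟨hya, le_rfl⟩ hxy

end MonotoneLHopital

theorem klFun_pos {x : ℝ} (hx : 0 ≤ x) (hx1 : x ≠ 1) : 0 < klFun x :=
  (klFun_nonneg hx).lt_of_ne' fun h => hx1 ((klFun_eq_zero_iff hx).1 h)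

theorem klFun_le_sq {x : ℝ} (hx : 0 ≤ x) : klFun x ≤ (x - 1) ^ 2 := by
  rw [klFun_apply]
  rcases hx.eq_or_lt with rfl | hx
  · simp
  nlinarith [mul_le_mul_of_nonneg_left (log_le_sub_one_of_pos hx) hx.le]

theorem mul_klFun_div_le {w x : ℝ} (hw : 0 < w) (hx : 0 ≤ x) :
    w * klFun (x / w) ≤ (x - w) ^ 2 / w :=
  calc w * klFun (x / w) ≤ w * (x / w - 1) ^ 2 :=
        mul_le_mul_of_nonneg_left (klFun_le_sq (div_nonneg hx hw.le)) hw.le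
    _ = (x - w) ^ 2 / w := by field_simp

section OneAddMul

variable {k x : ℝ}

theorem hasDerivAt_klFun_one_add_mul (h : 0 < 1 + k * x) :
    HasDerivAt (fun x => klFun (1 + k * x)) (k * log (1 + k * x)) x := by
  have := (hasDerivAt_klFun h.ne').comp x (((hasDerivAt_id x).const_mul k).const_add 1)
  exact this.congr_deriv (by simp [mul_comm])

theorem hasDerivAt_mul_log_one_add_mul (h : 0 < 1 + k * x) :
    HasDerivAt (fun x => k * log (1 + k * x)) (k ^ 2 / (1 + k * x)) x := by
  have := ((((hasDerivAt_id x).const_mul k).const_add 1).log h.ne').const_mul k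
  exact this.congr_deriv (by simp only [id]; ring)

theorem convex_setOf_one_add_mul_pos (k : ℝ) : Convex ℝ {x : ℝ | 0 < 1 + k * x} :=
  convex_iff_ordConnected.2 ⟨fun x hx y hy z hz => show 0 < 1 + k * z by
    rcases le_total 0 k with hk | hk
    · nlinarith [mul_le_mul_of_nonneg_left hz.1 hk, show 0 < 1 + k * x from hx]
    · nlinarith [mul_le_mul_of_nonpos_left hz.2 hk, show 0 < 1 + k * y from hy]⟩

end OneAddMul

section KeyRatio

variable {s σ : ℝ}

theorem antitoneOn_mul_log_div_mul_log (hσ : σ ≠ 0) (hσs : σ ≤ s) :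
    AntitoneOn (fun x => s * log (1 + s * x) / (σ * log (1 + σ * x)))
      (({x | 0 < 1 + s * x} ∩ {x | 0 < 1 + σ * x}) \ {0}) := by
  have hU : IsOpen ({x : ℝ | 0 < 1 + s * x} ∩ {x | 0 < 1 + σ * x}) :=
    (isOpen_lt continuous_const (by fun_prop)).inter (isOpen_lt continuous_const (by fun_prop))
  refine antitoneOn_div_of_antitoneOn_deriv_div
    ((convex_setOf_one_add_mul_pos s).inter (convex_setOf_one_add_mul_pos σ)) (by simp)
    (fun x hx => (hasDerivAt_mul_log_one_add_mul hx.1).continuousAt.continuousWithinAt)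
    (fun x hx => (hasDerivAt_mul_log_one_add_mul hx.2).continuousAt.continuousWithinAt)
    (fun x hx => hasDerivAt_mul_log_one_add_mul (hU.interior_eq ▸ hx.1).1)
    (fun x hx => hasDerivAt_mul_log_one_add_mul (hU.interior_eq ▸ hx.1).2)
    (fun x hx => div_ne_zero (pow_ne_zero 2 hσ) (hU.interior_eq ▸ hx.1).2.ne') (by simp) (by simp)
    ?_
  rw [hU.interior_eq]
  rintro x ⟨⟨hsx, hσx⟩, -⟩ y ⟨⟨hsy, hσy⟩, -⟩ hxy
  simp only [mem_ofPred_eq] at hsx hσx hsy hσy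
  dsimp only
  rw [div_div_div_eq, div_div_div_eq, div_le_div_iff₀ (by positivity) (by positivity)]
  have : (1 + σ * y) * (1 + s * x) ≤ (1 + σ * x) * (1 + s * y) := by nlinarith
  have := mul_le_mul_of_nonneg_left this (by positivity : (0 : ℝ) ≤ s ^ 2 * σ ^ 2)
  linarith

theorem antitoneOn_klFun_div_klFun {l r : ℝ} (hσ : σ ≠ 0) (hσs : σ ≤ s) (hl : l ≤ 0)
    (hr : 0 ≤ r) (hpos : ∀ x ∈ Ioo l r, 0 < 1 + s * x ∧ 0 < 1 + σ * x) :
    AntitoneOn (fun x => klFun (1 + s * x) / klFun (1 + σ * x)) (Icc l r \ {0}) := by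
  rw [← interior_Icc] at hpos
  refine antitoneOn_div_of_antitoneOn_deriv_div (convex_Icc l r) ⟨hl, hr⟩
    (continuous_klFun.comp (by fun_prop)).continuousOn
    (continuous_klFun.comp (by fun_prop)).continuousOn
    (fun x hx => hasDerivAt_klFun_one_add_mul (hpos x hx.1).1)
    (fun x hx => hasDerivAt_klFun_one_add_mul (hpos x hx.1).2)
    (fun x hx => mul_ne_zero hσ (log_ne_zero_of_pos_of_ne_one (hpos x hx.1).2 ?_))
    (by simp [klFun_one]) (by simp [klFun_one]) ((antitoneOn_mul_log_div_mul_log hσ hσs).mono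
      (sdiff_subset_sdiff_left fun x hx => hpos x hx))
  simpa [hσ] using hx.2

end KeyRatio

theorem KL_eq_sum_mul_klFun {n : ℕ} {p q : Fin n → ℝ} (hpq : ∀ i, q i = 0 → p i = 0)
    (hsum : ∑ i, p i = ∑ i, q i) : KL p q = ∑ i, q i * klFun (p i / q i) := by
  have hterm : ∀ i, q i * klFun (p i / q i) = p i * log (p i / q i) + (q i - p i) := by
    intro i
    rcases eq_or_ne (q i) 0 with h | h
    · simp [h, hpq i h]
    · rw [klFun_apply]
      field_simp
      ring
  simp only [hterm, Finset.sum_add_distrib, Finset.sum_sub_distrib, hsum, sub_self, add_zero, KL]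

theorem xi_eq_mul_klFun {a t : ℝ} (ha : a < 1) (ht : t ≤ 1) :
    xi a t = (1 - a) * klFun ((1 - t) / (1 - a)) := by
  have h1a : 1 - a ≠ 0 := (sub_pos.2 ha).ne'
  rw [klFun_apply, xi, zeta, zeta]
  rcases ht.eq_or_lt with rfl | ht
  · simp
  · rw [log_div (sub_pos.2 ht).ne' h1a]
    field_simp
    ring

theorem xi_pos_s14 {a t : ℝ} (ha : a < 1) (ht : t ≤ 1) (hta : t ≠ a) : 0 < xi a t := by
  have h1a : 0 < 1 - a := sub_pos.2 ha
  rw [xi_eq_mul_klFun ha ht]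
  refine mul_pos h1a (klFun_pos (div_nonneg (sub_nonneg.2 ht) h1a.le) fun h => hta ?_)
  rw [div_eq_one_iff_eq h1a.ne'] at h
  linarith

theorem mul_klFun_mul_xi_le {a b c u v : ℝ} (ha : 0 ≤ a) (ha1 : a < 1) (hc : 0 ≤ c)
    (hcb : c < b) (hb : b ≤ 1) (hab : a ≠ b) (hac : a ≠ c) (hu : 0 ≤ u) (hv : 0 ≤ v) :
    (a * u + (1 - a) * v) * klFun ((b * u + (1 - b) * v) / (a * u + (1 - a) * v)) * xi a c ≤
      xi a b * ((a * u + (1 - a) * v) *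
        klFun ((c * u + (1 - c) * v) / (a * u + (1 - a) * v))) := by
  set q := a * u + (1 - a) * v
  have h1a : 0 < 1 - a := sub_pos.2 ha1
  rcases (show 0 ≤ q by positivity).eq_or_lt with hq | hq
  · simp [← hq]
  set s := (u - v) / q
  set σ := -1 / (1 - a)
  have hx : ∀ t, (t * u + (1 - t) * v) / q = 1 + s * (t - a) := fun t => by
    rw [div_eq_iff hq.ne']
    simp only [s]
    field_simp
    simp only [q]
    ring
  have hy : ∀ t, (1 - t) / (1 - a) = 1 + σ * (t - a) := fun t => by
    simp only [σ]
    field_simp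
    ring
  have hσs : σ ≤ s := by
    rw [div_le_div_iff₀ h1a hq]
    nlinarith
  have hpos : ∀ x ∈ Ioo (-a) (1 - a), 0 < 1 + s * x ∧ 0 < 1 + σ * x := by
    intro x hx'
    have ht0 : 0 < x + a := by linarith [hx'.1]
    have ht1 : 0 < 1 - (x + a) := by linarith [hx'.2]
    rw [← add_sub_cancel_right x a, ← hx, ← hy]
    refine ⟨div_pos ?_ hq, div_pos ht1 h1a⟩
    rcases hu.eq_or_lt with rfl | hu <;> nlinarith
  have key := antitoneOn_klFun_div_klFun (by simp [σ, h1a.ne']) hσs (neg_nonpos.2 ha)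
    h1a.le hpos ⟨⟨by linarith, by linarith⟩, sub_ne_zero.2 hac.symm⟩
    ⟨⟨by linarith, by linarith⟩, sub_ne_zero.2 hab.symm⟩ (sub_le_sub_right hcb.le a)
  have hY : ∀ {t}, t ≤ 1 → t ≠ a → 0 < klFun ((1 - t) / (1 - a)) := fun ht hta =>
    pos_of_mul_pos_right (xi_eq_mul_klFun ha1 ht ▸ xi_pos_s14 ha1 ht hta) h1a.le
  simp only [← hx, ← hy] at key
  rw [div_le_div_iff₀ (hY hb (Ne.symm hab)) (hY (hcb.le.trans hb) (Ne.symm hac))] at key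
  rw [xi_eq_mul_klFun ha1 hb, xi_eq_mul_klFun ha1 (hcb.le.trans hb)]
  calc _ = q * (1 - a) * (klFun ((b * u + (1 - b) * v) / q) * klFun ((1 - c) / (1 - a))) := by
        ring
    _ ≤ q * (1 - a) * (klFun ((c * u + (1 - c) * v) / q) * klFun ((1 - b) / (1 - a))) := by
        gcongr
    _ = _ := by ring

theorem mul_klFun_mul_one_sub_le {b c u v : ℝ} (hc : 0 ≤ c) (hcb : c < b) (hb : b < 1)
    (hu : 0 ≤ u) (hv : 0 ≤ v) :
    u * klFun ((b * u + (1 - b) * v) / u) * (1 - c) ≤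
      (1 - b) * (u * klFun ((c * u + (1 - c) * v) / u)) := by
  rcases hu.eq_or_lt with rfl | hu
  · simp
  set φ := fun t => klFun ((t * u + (1 - t) * v) / u)
  have hφ : ConvexOn ℝ (Icc 0 1) φ := by
    refine ((convexOn_klFun.comp_affineMap (AffineMap.lineMap (v / u) 1)).subset
      (fun t ht => ?_) (convex_Icc 0 1)).congr fun t _ => ?_
    · simp only [mem_preimage, AffineMap.lineMap_apply_ring, mem_Ici]
      nlinarith [ht.1, ht.2, div_nonneg hv hu.le]
    · simp only [Function.comp, AffineMap.lineMap_apply_ring, φ]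
      field_simp
      ring_nf
  have hφ1 : φ 1 = 0 := by simp [φ, hu.ne', klFun_one]
  have key := hφ.secant_mono (right_mem_Icc.2 zero_le_one) ⟨hc, (hcb.trans hb).le⟩
    ⟨hc.trans hcb.le, hb.le⟩ (hcb.trans hb).ne hb.ne hcb.le
  rw [hφ1, sub_zero, sub_zero, ← neg_div_neg_eq (φ c), ← neg_div_neg_eq (φ b), neg_sub, neg_sub,
    div_le_div_iff₀ (by linarith) (by linarith)] at key
  have := mul_le_mul_of_nonneg_left key hu.le
  linarith

/-- The paper's `z(t) = t α + (1 - t) β`. -/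
def mix {n : ℕ} (α β : Fin n → ℝ) (t : ℝ) : Fin n → ℝ := fun i => t * α i + (1 - t) * β i

theorem sum_mix {n : ℕ} {α β : Fin n → ℝ} (hα : ∑ i, α i = 1) (hβ : ∑ i, β i = 1) (t : ℝ) :
    ∑ i, mix α β t i = 1 := by
  simp only [mix, Finset.sum_add_distrib, ← Finset.mul_sum, hα, hβ]
  ring

def klRatios (a b c : ℝ) : Set ℝ :=
  {x | ∃ (n : ℕ) (α β : Fin n → ℝ), (∀ i, 0 ≤ α i) ∧ ∑ i, α i = 1 ∧ (∀ i, 0 ≤ β i) ∧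
    ∑ i, β i = 1 ∧ (∀ i, mix α β a i = 0 → mix α β b i = 0) ∧
    (∀ i, mix α β a i = 0 → mix α β c i = 0) ∧ 0 < KL (mix α β b) (mix α β a) ∧
    0 < KL (mix α β c) (mix α β a) ∧ x = KL (mix α β b) (mix α β a) / KL (mix α β c) (mix α β a)}

theorem KL_mix_div_le_rho {n : ℕ} {a b c : ℝ} (ha : 0 ≤ a) (ha1 : a ≤ 1) (hc : 0 ≤ c)
    (hcb : c < b) (hb : b ≤ 1) (hab : a ≠ b) (hac : a ≠ c) {α β : Fin n → ℝ}
    (hα0 : ∀ i, 0 ≤ α i) (hα1 : ∑ i, α i = 1) (hβ0 : ∀ i, 0 ≤ β i) (hβ1 : ∑ i, β i = 1)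
    (hvb : ∀ i, mix α β a i = 0 → mix α β b i = 0) (hvc : ∀ i, mix α β a i = 0 → mix α β c i = 0)
    (hKc : 0 < KL (mix α β c) (mix α β a)) :
    KL (mix α β b) (mix α β a) / KL (mix α β c) (mix α β a) ≤ rho a b c := by
  have hsum := sum_mix hα1 hβ1
  rw [KL_eq_sum_mul_klFun hvc (by rw [hsum, hsum])] at hKc ⊢
  rw [KL_eq_sum_mul_klFun hvb (by rw [hsum, hsum])]
  rcases ha1.lt_or_eq with ha1 | rfl
  · rw [rho, if_pos ha1, div_le_div_iff₀ hKc (xi_pos_s14 ha1 (hcb.le.trans hb) (Ne.symm hac)),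
      Finset.sum_mul, Finset.mul_sum]
    exact Finset.sum_le_sum fun i _ =>
      mul_klFun_mul_xi_le ha ha1 hc hcb hb hab hac (hα0 i) (hβ0 i)
  · rw [rho, if_neg (lt_irrefl 1), div_le_div_iff₀ hKc (by linarith), Finset.sum_mul,
      Finset.mul_sum]
    refine Finset.sum_le_sum fun i _ => ?_
    have := mul_klFun_mul_one_sub_le hc hcb (hb.lt_of_ne (Ne.symm hab)) (hα0 i) (hβ0 i)
    simpa only [mix, one_mul, sub_self, zero_mul, add_zero] using this

theorem div_mem_klRatios {n : ℕ} {a b c : ℝ} {α β : Fin n → ℝ} (hα0 : ∀ i, 0 ≤ α i)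
    (hα1 : ∑ i, α i = 1) (hβ0 : ∀ i, 0 ≤ β i) (hβ1 : ∑ i, β i = 1)
    (hpos : ∀ i, 0 < mix α β a i) (hKb : 0 < KL (mix α β b) (mix α β a))
    (hKc : 0 < KL (mix α β c) (mix α β a)) :
    KL (mix α β b) (mix α β a) / KL (mix α β c) (mix α β a) ∈ klRatios a b c :=
  ⟨n, α, β, hα0, hα1, hβ0, hβ1, fun i h => absurd h (hpos i).ne',
    fun i h => absurd h (hpos i).ne', hKb, hKc, rfl⟩

theorem Filter.Tendsto.div_of_div {l : Filter ℝ} {f g L : ℝ → ℝ} {A B : ℝ}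
    (hf : Tendsto (fun x => f x / L x) l (𝓝 A)) (hg : Tendsto (fun x => g x / L x) l (𝓝 B))
    (hB : B ≠ 0) (hL : ∀ᶠ x in l, L x ≠ 0) : Tendsto (fun x => f x / g x) l (𝓝 (A / B)) :=
  (hf.div hg hB).congr' (hL.mono fun _ hx => div_div_div_cancel_right₀ hx _ _)

section LowerBound

variable {a t q : ℝ}

theorem mix_zero_one_pos (ha0 : 0 ≤ a) (ha : a < 1) (hq : 0 < q) (hq1 : q < 1) (i : Fin 2) :
    0 < mix ![0, 1] ![q, 1 - q] a i := by
  have := mul_pos (sub_pos.2 ha) (sub_pos.2 hq1)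
  fin_cases i <;> simp [mix] <;> nlinarith

theorem KL_mix_zero_one_eq (ha0 : 0 ≤ a) (ha : a < 1) (ht : t ≤ 1) (hq : 0 < q) (hq1 : q < 1) :
    KL (mix ![0, 1] ![q, 1 - q] t) (mix ![0, 1] ![q, 1 - q] a) =
      q * xi a t + (a + (1 - a) * (1 - q)) *
        klFun ((t + (1 - t) * (1 - q)) / (a + (1 - a) * (1 - q))) := by
  rw [KL_eq_sum_mul_klFun (fun i hi => absurd hi (mix_zero_one_pos ha0 ha hq hq1 i).ne')
    (by rw [sum_mix (by simp) (by simp), sum_mix (by simp) (by simp)]),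
    Fin.sum_univ_two, xi_eq_mul_klFun ha ht]
  simp only [mix, Matrix.cons_val_zero, Matrix.cons_val_one, mul_zero, zero_add, mul_one]
  rw [mul_div_mul_right _ _ hq.ne']
  ring

theorem tendsto_KL_mix_zero_one_div (ha0 : 0 ≤ a) (ha : a < 1) (ht0 : 0 ≤ t) (ht : t ≤ 1) :
    Tendsto (fun q => KL (mix ![0, 1] ![q, 1 - q] t) (mix ![0, 1] ![q, 1 - q] a) / q)
      (𝓝[>] 0) (𝓝 (xi a t)) := by
  set w := fun q : ℝ => a + (1 - a) * (1 - q)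
  set R := fun q : ℝ => w q * klFun ((t + (1 - t) * (1 - q)) / w q)
  have hw : ∀ q ∈ Ioo (0 : ℝ) 1, 0 < w q := fun q hq => by
    have := mul_pos (sub_pos.2 ha) (sub_pos.2 hq.2)
    simp only [w]
    linarith
  have hw' : ∀ q ∈ Ioo (0 : ℝ) 1, 0 ≤ t + (1 - t) * (1 - q) := fun q hq => by
    have := mul_nonneg (sub_nonneg.2 ht) (sub_pos.2 hq.2).le
    linarith
  have hupper : Tendsto (fun q => (t - a) ^ 2 * q / w q) (𝓝[>] 0) (𝓝 0) := by
    refine tendsto_nhdsWithin_of_tendsto_nhds ?_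
    have : ContinuousAt (fun q => (t - a) ^ 2 * q / w q) 0 :=
      ContinuousAt.div (by fun_prop) (by fun_prop) (by simp [w])
    simpa using this.tendsto
  -- `R q = O(q ^ 2)`, since `w klFun (x / w) ≤ (x - w) ^ 2 / w`
  have hR : Tendsto (fun q => R q / q) (𝓝[>] 0) (𝓝 0) := by
    refine tendsto_of_tendsto_of_tendsto_of_le_of_le' tendsto_const_nhds hupper ?_ ?_ <;>
      filter_upwards [Ioo_mem_nhdsGT one_pos] with q hq
    · exact div_nonneg (mul_nonneg (hw q hq).le
        (klFun_nonneg (div_nonneg (hw' q hq) (hw q hq).le))) hq.1.le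
    · rw [div_le_div_iff₀ hq.1 (hw q hq)]
      have := mul_klFun_div_le (hw q hq) (hw' q hq)
      rw [le_div_iff₀ (hw q hq)] at this
      have h : t + (1 - t) * (1 - q) - w q = (t - a) * q := by simp only [w]; ring
      rw [h] at this
      nlinarith
  have := (tendsto_const_nhds (x := xi a t)).add hR
  rw [add_zero] at this
  refine this.congr' ?_
  filter_upwards [Ioo_mem_nhdsGT one_pos] with q hq
  rw [KL_mix_zero_one_eq ha0 ha ht hq.1 hq.2, add_div, mul_div_cancel_left₀ _ hq.1.ne']

theorem KL_mix_zero_one_pos (ha0 : 0 ≤ a) (ha : a < 1) (ht0 : 0 ≤ t) (ht : t ≤ 1) (hta : t ≠ a)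
    (hq : 0 < q) (hq1 : q < 1) :
    0 < KL (mix ![0, 1] ![q, 1 - q] t) (mix ![0, 1] ![q, 1 - q] a) := by
  rw [KL_mix_zero_one_eq ha0 ha ht hq hq1]
  have hw : 0 < a + (1 - a) * (1 - q) := by nlinarith [mul_pos (sub_pos.2 ha) (sub_pos.2 hq1)]
  have hx : 0 ≤ t + (1 - t) * (1 - q) := by
    nlinarith [mul_nonneg (sub_nonneg.2 ht) (sub_pos.2 hq1).le]
  exact add_pos_of_pos_of_nonneg (mul_pos hq (xi_pos_s14 ha ht hta))
    (mul_nonneg hw.le (klFun_nonneg (div_nonneg hx hw.le)))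

theorem xi_div_xi_le_of_mem_upperBounds {b c M : ℝ} (ha0 : 0 ≤ a) (ha : a < 1) (hc : 0 ≤ c)
    (hcb : c < b) (hb : b ≤ 1) (hab : a ≠ b) (hac : a ≠ c) (hM : M ∈ upperBounds (klRatios a b c)) :
    xi a b / xi a c ≤ M := by
  have hc1 : c ≤ 1 := hcb.le.trans hb
  refine le_of_tendsto ((tendsto_KL_mix_zero_one_div ha0 ha (hc.trans hcb.le) hb).div_of_div
    (tendsto_KL_mix_zero_one_div ha0 ha hc hc1) (xi_pos_s14 ha hc1 (Ne.symm hac)).ne'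
    (eventually_mem_nhdsWithin.mono fun q hq => ne_of_gt hq)) ?_
  filter_upwards [Ioo_mem_nhdsGT one_pos] with q hq
  exact hM (div_mem_klRatios (by simp [Fin.forall_fin_two]) (by simp)
    (Fin.forall_fin_two.2 ⟨hq.1.le, by simpa using hq.2.le⟩) (by simp)
    (mix_zero_one_pos ha0 ha hq.1 hq.2)
    (KL_mix_zero_one_pos ha0 ha (hc.trans hcb.le) hb (Ne.symm hab) hq.1 hq.2)
    (KL_mix_zero_one_pos ha0 ha hc hc1 (Ne.symm hac) hq.1 hq.2))

end LowerBound

section LowerBoundOne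

variable {t e : ℝ}

theorem mix_one_pos (he : 0 < e) (he1 : e < 1) (i : Fin 2) :
    0 < mix ![e, 1 - e] ![1, 0] 1 i := by
  fin_cases i <;> simp [mix] <;> linarith

theorem KL_mix_one_eq (he : 0 < e) (he1 : e < 1) :
    KL (mix ![e, 1 - e] ![1, 0] t) (mix ![e, 1 - e] ![1, 0] 1) =
      e * klFun ((t * e + (1 - t)) / e) + (1 - e) * klFun t := by
  rw [KL_eq_sum_mul_klFun (fun i hi => absurd hi (mix_one_pos he he1 i).ne')
    (by rw [sum_mix (by simp) (by simp), sum_mix (by simp) (by simp)]), Fin.sum_univ_two]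
  simp only [mix, Matrix.cons_val_zero, Matrix.cons_val_one, mul_one, mul_zero, add_zero,
    one_mul, sub_self]
  rw [mul_div_cancel_right₀ _ (sub_pos.2 he1).ne']

theorem KL_mix_one_pos (ht0 : 0 ≤ t) (ht : t < 1) (he : 0 < e) (he1 : e < 1) :
    0 < KL (mix ![e, 1 - e] ![1, 0] t) (mix ![e, 1 - e] ![1, 0] 1) := by
  rw [KL_mix_one_eq he he1]
  have hx : 0 ≤ t * e + (1 - t) := by nlinarith
  exact add_pos_of_nonneg_of_pos (mul_nonneg he.le (klFun_nonneg (div_nonneg hx he.le)))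
    (mul_pos (sub_pos.2 he1) (klFun_pos ht0 ht.ne))

theorem tendsto_KL_mix_one_div_neg_log (ht : t ≤ 1) :
    Tendsto (fun e => KL (mix ![e, 1 - e] ![1, 0] t) (mix ![e, 1 - e] ![1, 0] 1) / -log e)
      (𝓝[>] 0) (𝓝 (1 - t)) := by
  set X := fun e : ℝ => t * e + (1 - t)
  set B := fun e => X e * log (X e) + e - X e + (1 - e) * klFun t
  have hX : Continuous X := by fun_prop
  have hB : Continuous B := by
    simp only [B]
    exact ((continuous_mul_log.comp hX).add continuous_id).sub hX |>.add (by fun_prop)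
  have hL : Tendsto (fun e => -log e) (𝓝[>] 0) atTop :=
    tendsto_neg_atBot_atTop.comp tendsto_log_nhdsGT_zero
  have := ((hX.tendsto 0).mono_left nhdsWithin_le_nhds).add
    (((hB.tendsto 0).mono_left nhdsWithin_le_nhds).div_atTop hL)
  rw [add_zero, show X 0 = 1 - t by simp [X]] at this
  refine this.congr' ?_
  filter_upwards [Ioo_mem_nhdsGT one_pos] with e he
  have hXe : 0 < X e := by
    simp only [X]
    nlinarith [mul_nonneg (sub_nonneg.2 ht) (sub_pos.2 he.2).le, he.1]
  have hlog : -log e ≠ 0 := neg_ne_zero.2 (log_neg he.1 he.2).ne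
  rw [KL_mix_one_eq he.1 he.2, eq_div_iff hlog, add_mul, div_mul_cancel₀ _ hlog, klFun_apply,
    log_div hXe.ne' he.1.ne']
  have he0 := he.1.ne'
  simp only [B]
  field_simp
  ring

theorem one_sub_div_one_sub_le_of_mem_upperBounds {b c M : ℝ} (hc : 0 ≤ c) (hcb : c < b)
    (hb : b < 1) (hM : M ∈ upperBounds (klRatios 1 b c)) : (1 - b) / (1 - c) ≤ M := by
  refine le_of_tendsto ((tendsto_KL_mix_one_div_neg_log hb.le).div_of_div
    (tendsto_KL_mix_one_div_neg_log (hcb.trans hb).le) (by linarith)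
    (Ioo_mem_nhdsGT one_pos |> Filter.mem_of_superset <| fun e he =>
      neg_ne_zero.2 (log_neg he.1 he.2).ne)) ?_
  filter_upwards [Ioo_mem_nhdsGT one_pos] with e he
  exact hM (div_mem_klRatios (Fin.forall_fin_two.2 ⟨he.1.le, by simpa using he.2.le⟩) (by simp)
    (by simp [Fin.forall_fin_two]) (by simp) (mix_one_pos he.1 he.2)
    (KL_mix_one_pos (hc.trans hcb.le) hb he.1 he.2) (KL_mix_one_pos hc (hcb.trans hb) he.1 he.2))

end LowerBoundOne

theorem stmt14 (a b c : ℝ) (ha : 0 ≤ a) (ha1 : a ≤ 1) (hc : 0 ≤ c) (hcb : c < b)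
    (hb : b ≤ 1) (hab : a ≠ b) (hac : a ≠ c) :
    IsLUB { x : ℝ | ∃ (n : ℕ) (α β : Fin n → ℝ),
      (∀ i, 0 ≤ α i) ∧ (∑ i, α i = 1) ∧
      (∀ i, 0 ≤ β i) ∧ (∑ i, β i = 1) ∧
      (∀ i, (a * α i + (1 - a) * β i) = 0 → (b * α i + (1 - b) * β i) = 0) ∧
      (∀ i, (a * α i + (1 - a) * β i) = 0 → (c * α i + (1 - c) * β i) = 0) ∧
      0 < KL (fun i => b * α i + (1 - b) * β i) (fun i => a * α i + (1 - a) * β i) ∧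
      0 < KL (fun i => c * α i + (1 - c) * β i) (fun i => a * α i + (1 - a) * β i) ∧
      x = KL (fun i => b * α i + (1 - b) * β i) (fun i => a * α i + (1 - a) * β i) /
          KL (fun i => c * α i + (1 - c) * β i) (fun i => a * α i + (1 - a) * β i) }
      (rho a b c) := by
  change IsLUB (klRatios a b c) (rho a b c)
  refine ⟨?_, fun M hM => ?_⟩
  · rintro x ⟨n, α, β, hα0, hα1, hβ0, hβ1, hvb, hvc, -, hKc, rfl⟩
    exact KL_mix_div_le_rho ha ha1 hc hcb hb hab hac hα0 hα1 hβ0 hβ1 hvb hvc hKc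
  rcases ha1.lt_or_eq with ha1 | rfl
  · rw [rho, if_pos ha1]
    exact xi_div_xi_le_of_mem_upperBounds ha ha1 hc hcb hb hab hac hM
  · rw [rho, if_neg (lt_irrefl 1)]
    exact one_sub_div_one_sub_le_of_mem_upperBounds hc hcb (hb.lt_of_ne (Ne.symm hab)) hM
end

section
/- Let α = (1 − δ·f(δ), δ·f(δ)) and β = (1 − δ, δ) be binary distributions, where δ ∈ (0,1), 0 ≤ f(δ) < 1, and f(δ) → 0 as δ → 0⁺. Fix 0 ≤ a ≤ 1, 0 ≤ c < b ≤ 1, a ≠ b, a ≠ c, and let z(t) = tα + (1-t)β, u = z(a), v = z(b), w = z(c). Then D(v‖u)/D(w‖u) → ρ(a,b,c) as δ → 0. -/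
/-!
Every mixture `z(s)` has the form `(1 - δ q, δ q)` with `q = 1 - s (1 - f δ) → 1 - s`, and
`log (1 - δ q) = -δ q + o(δ)`. For `a < 1` this gives `D(z(s) ‖ z(a)) = δ ξ_a(s) + o(δ)`.
For `a = 1` the reference point is `(1 - δ f, δ f)`: when `f δ ≠ 0` the dominant term is
`δ q log (q / f) ~ δ (1 - s) (-log f)`, and when `f δ = 0` the convention `log (x / 0) = 0`
reduces the divergence to `(1 - δ q) log (1 - δ q) ~ -δ (1 - s)`. In both regimes the ratio
tends to `(1 - b) / (1 - c)`.
-/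

open Filter Real Set Topology

lemma KL_fin_two (x y u v : ℝ) : KL ![x, y] ![u, v] = x * log (x / u) + y * log (y / v) := by
  simp [KL, Fin.sum_univ_two]

lemma mul_log_div_eq (x : ℝ) {y : ℝ} (hy : y ≠ 0) : x * log (x / y) = x * log x - x * log y := by
  rcases eq_or_ne x 0 with rfl | hx
  · simp
  · rw [log_div hx hy, mul_sub]

lemma xi_pos_s15 {a c : ℝ} (ha : a < 1) (hc : c < 1) (hac : a ≠ c) : 0 < xi a c := by
  have ha' : 0 < 1 - a := sub_pos.2 ha
  have hc' : 0 < 1 - c := sub_pos.2 hc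
  have hy : 0 < (1 - a) / (1 - c) := div_pos ha' hc'
  have hy1 : (1 - a) / (1 - c) ≠ 1 := fun h =>
    hac (by linarith [(div_eq_one_iff_eq hc'.ne').1 h])
  have key : xi a c = (1 - c) * ((1 - a) / (1 - c) - 1 - log ((1 - a) / (1 - c))) := by
    rw [log_div ha'.ne' hc'.ne']
    simp only [xi, zeta]
    field_simp
    ring
  rw [key]
  exact mul_pos hc' (by linarith [log_lt_sub_one_of_pos hy hy1])

lemma tendsto_div_of_normalized {ι : Type*} {l : Filter ι} {u v g : ι → ℝ} {U V : ℝ}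
    (hu : Tendsto (fun x => u x / g x) l (𝓝 U)) (hv : Tendsto (fun x => v x / g x) l (𝓝 V))
    (hV : V ≠ 0) (hg : ∀ᶠ x in l, g x ≠ 0) : Tendsto (fun x => u x / v x) l (𝓝 (U / V)) :=
  (hu.div hv hV).congr' (hg.mono fun _ hx => div_div_div_cancel_right₀ hx _ _)

section Expansion

variable {l : Filter ℝ} {q r : ℝ → ℝ} {Q R : ℝ}

lemma tendsto_comp_mul_div_of_hasDerivAt (hl : l ≤ 𝓝[≠] 0) {g : ℝ → ℝ} {g' : ℝ}
    (hg : HasDerivAt g g' 0) (hg0 : g 0 = 0) (hq : Tendsto q l (𝓝 Q)) :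
    Tendsto (fun δ => g (δ * q δ) / δ) l (𝓝 (Q * g')) := by
  have hδ : Tendsto (fun δ : ℝ => δ) l (𝓝 0) :=
    tendsto_id.mono_left (hl.trans nhdsWithin_le_nhds)
  have hslope : Tendsto (dslope g 0) (𝓝 0) (𝓝 g') := by
    simpa [dslope_same, hg.deriv] using
      (continuousAt_dslope_same.2 hg.differentiableAt).tendsto
  have hδq : Tendsto (fun δ => δ * q δ) l (𝓝 0) := by simpa using hδ.mul hq
  refine (hq.mul (hslope.comp hδq)).congr' ?_
  filter_upwards [hl self_mem_nhdsWithin] with δ (hδ0 : δ ≠ 0)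
  rcases eq_or_ne (q δ) 0 with h | h
  · simp [h, hg0]
  · rw [Function.comp_apply, dslope_of_ne _ (mul_ne_zero hδ0 h), slope_def_field, hg0]
    field_simp
    ring

lemma tendsto_log_one_sub_mul_div (hl : l ≤ 𝓝[≠] 0) (hq : Tendsto q l (𝓝 Q)) :
    Tendsto (fun δ => log (1 - δ * q δ) / δ) l (𝓝 (-Q)) := by
  have hderiv : HasDerivAt (fun u => log (1 - u)) (-1) 0 := by
    simpa using ((hasDerivAt_id (0 : ℝ)).const_sub 1).log (by norm_num)
  simpa using tendsto_comp_mul_div_of_hasDerivAt hl hderiv (by simp) hq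

lemma tendsto_one_sub_mul_log_div (hl : l ≤ 𝓝[≠] 0) (hq : Tendsto q l (𝓝 Q))
    (hr : Tendsto r l (𝓝 R)) :
    Tendsto (fun δ => (1 - δ * q δ) * log ((1 - δ * q δ) / (1 - δ * r δ)) / δ) l
      (𝓝 (R - Q)) := by
  have hδ : Tendsto (fun δ : ℝ => δ) l (𝓝 0) :=
    tendsto_id.mono_left (hl.trans nhdsWithin_le_nhds)
  have hp : Tendsto (fun δ => 1 - δ * q δ) l (𝓝 1) := by simpa using (hδ.mul hq).const_sub 1
  have hp' : Tendsto (fun δ => 1 - δ * r δ) l (𝓝 1) := by simpa using (hδ.mul hr).const_sub 1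
  have hlim := hp.mul
    ((tendsto_log_one_sub_mul_div hl hq).sub (tendsto_log_one_sub_mul_div hl hr))
  rw [one_mul, neg_sub_neg] at hlim
  refine hlim.congr' ?_
  filter_upwards [hp.eventually_ne one_ne_zero, hp'.eventually_ne one_ne_zero] with δ h h'
  rw [log_div h h']
  ring

lemma tendsto_KL_div (hl : l ≤ 𝓝[≠] 0) (hq : Tendsto q l (𝓝 Q)) (hr : Tendsto r l (𝓝 R))
    (hR : R ≠ 0) :
    Tendsto (fun δ => KL ![1 - δ * q δ, δ * q δ] ![1 - δ * r δ, δ * r δ] / δ) l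
      (𝓝 (R - Q + (Q * log Q - Q * log R))) := by
  have hlim := (tendsto_one_sub_mul_log_div hl hq hr).add
    (((continuous_mul_log.tendsto Q).comp hq).sub
      (hq.mul ((continuousAt_log hR).tendsto.comp hr)))
  refine hlim.congr' ?_
  filter_upwards [hl self_mem_nhdsWithin, hr.eventually_ne hR] with δ (hδ : δ ≠ 0) hrδ
  simp only [Function.comp_apply, KL_fin_two, mul_div_mul_left _ _ hδ, add_div]
  rw [mul_assoc δ, mul_log_div_eq _ hrδ]
  field_simp

lemma tendsto_KL_div_mul_neg_log (hl : l ≤ 𝓝[≠] 0) (hq : Tendsto q l (𝓝 Q))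
    (hr : Tendsto r l (𝓝[≠] 0)) :
    Tendsto (fun δ => KL ![1 - δ * q δ, δ * q δ] ![1 - δ * r δ, δ * r δ] / (δ * -log (r δ))) l
      (𝓝 Q) := by
  have hlog : Tendsto (fun δ => -log (r δ)) l atTop :=
    tendsto_neg_atBot_atTop.comp (tendsto_log_nhdsNE_zero.comp hr)
  have hlim := (((tendsto_one_sub_mul_log_div hl hq (hr.mono_right nhdsWithin_le_nhds)).add
    ((continuous_mul_log.tendsto Q).comp hq)).mul (tendsto_inv_atTop_zero.comp hlog)).add hq
  rw [mul_zero, zero_add] at hlim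
  refine hlim.congr' ?_
  filter_upwards [hl self_mem_nhdsWithin, (tendsto_nhdsWithin_iff.1 hr).2,
    hlog.eventually_gt_atTop 0] with δ (hδ : δ ≠ 0) (hrδ : r δ ≠ 0) hlogδ
  have hlogδ' : log (r δ) ≠ 0 := (neg_pos.1 hlogδ).ne
  simp only [Function.comp_apply, KL_fin_two, mul_div_mul_left _ _ hδ]
  rw [mul_assoc δ, mul_log_div_eq _ hrδ]
  field_simp
  ring

lemma tendsto_KL_one_zero_div (hl : l ≤ 𝓝[≠] 0) (hq : Tendsto q l (𝓝 Q)) :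
    Tendsto (fun δ => KL ![1 - δ * q δ, δ * q δ] ![1, 0] / δ) l (𝓝 (-Q)) := by
  simpa [KL_fin_two] using tendsto_one_sub_mul_log_div hl hq (tendsto_const_nhds (x := 0))

end Expansion

def tailWeight (f : ℝ → ℝ) (s δ : ℝ) : ℝ := 1 - s * (1 - f δ)

lemma mix_eq_tailWeight (f : ℝ → ℝ) (s δ : ℝ) :
    (fun i => s * ![1 - δ * f δ, δ * f δ] i + (1 - s) * ![1 - δ, δ] i) =
      ![1 - δ * tailWeight f s δ, δ * tailWeight f s δ] := by
  funext i
  fin_cases i <;> simp [tailWeight] <;> ring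

lemma tailWeight_one (f : ℝ → ℝ) : tailWeight f 1 = f := by
  funext δ
  simp [tailWeight]

section Mixtures

variable {l : Filter ℝ} {f : ℝ → ℝ}

lemma tendsto_tailWeight (hf : Tendsto f l (𝓝 0)) (s : ℝ) :
    Tendsto (tailWeight f s) l (𝓝 (1 - s)) := by
  unfold tailWeight
  simpa using ((hf.const_sub 1).const_mul s).const_sub 1

lemma tendsto_KL_ratio_of_lt_one (hl : l ≤ 𝓝[≠] 0) (hf : Tendsto f l (𝓝 0)) {a b c : ℝ}
    (ha : a < 1) (hc : c < 1) (hac : a ≠ c) :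
    Tendsto (fun δ =>
        KL ![1 - δ * tailWeight f b δ, δ * tailWeight f b δ]
            ![1 - δ * tailWeight f a δ, δ * tailWeight f a δ] /
          KL ![1 - δ * tailWeight f c δ, δ * tailWeight f c δ]
            ![1 - δ * tailWeight f a δ, δ * tailWeight f a δ])
      l (𝓝 (xi a b / xi a c)) := by
  have hxi (s : ℝ) :
      1 - a - (1 - s) + ((1 - s) * log (1 - s) - (1 - s) * log (1 - a)) = xi a s := by
    simp only [xi, zeta]
    ring
  have ha' : 1 - a ≠ 0 := sub_ne_zero.2 ha.ne'
  rw [← hxi b, ← hxi c]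
  refine tendsto_div_of_normalized
    (tendsto_KL_div hl (tendsto_tailWeight hf b) (tendsto_tailWeight hf a) ha')
    (tendsto_KL_div hl (tendsto_tailWeight hf c) (tendsto_tailWeight hf a) ha') ?_
    (hl self_mem_nhdsWithin)
  rw [hxi]
  exact (xi_pos_s15 ha hc hac).ne'

lemma tendsto_KL_ratio_of_eq_one (hl : l ≤ 𝓝[≠] 0) (hf : Tendsto f l (𝓝 0)) {b c : ℝ}
    (hc : c < 1) :
    Tendsto (fun δ =>
        KL ![1 - δ * tailWeight f b δ, δ * tailWeight f b δ] ![1 - δ * f δ, δ * f δ] /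
          KL ![1 - δ * tailWeight f c δ, δ * tailWeight f c δ] ![1 - δ * f δ, δ * f δ])
      l (𝓝 ((1 - b) / (1 - c))) := by
  have hc' : 1 - c ≠ 0 := sub_ne_zero.2 hc.ne'
  have hsub (S : Set ℝ) : l ⊓ 𝓟 S ≤ 𝓝[≠] 0 := inf_le_left.trans hl
  have hq (s : ℝ) (S : Set ℝ) : Tendsto (tailWeight f s) (l ⊓ 𝓟 S) (𝓝 (1 - s)) :=
    (tendsto_tailWeight hf s).mono_left inf_le_left
  classical
  refine (Tendsto.if (p := fun δ => f δ = 0) ?_ ?_).congr fun δ => ite_self _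
  · rw [← neg_div_neg_eq]
    refine (tendsto_div_of_normalized (tendsto_KL_one_zero_div (hsub _) (hq b _))
      (tendsto_KL_one_zero_div (hsub _) (hq c _)) (neg_ne_zero.2 hc')
      (hsub _ self_mem_nhdsWithin)).congr' ?_
    filter_upwards [mem_inf_of_right (mem_principal_self _)] with δ (hδ : f δ = 0)
    simp [hδ]
  · have hr : Tendsto f (l ⊓ 𝓟 {δ | ¬f δ = 0}) (𝓝[≠] 0) :=
      tendsto_nhdsWithin_iff.2
        ⟨hf.mono_left inf_le_left, mem_inf_of_right (mem_principal_self _)⟩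
    refine tendsto_div_of_normalized (tendsto_KL_div_mul_neg_log (hsub _) (hq b _) hr)
      (tendsto_KL_div_mul_neg_log (hsub _) (hq c _) hr) hc' ?_
    filter_upwards [hsub _ self_mem_nhdsWithin,
      (tendsto_log_nhdsNE_zero.comp hr).eventually_ne_atBot 0] with δ hδ hlog
    exact mul_ne_zero hδ (neg_ne_zero.2 hlog)

end Mixtures

theorem stmt15_general (f : ℝ → ℝ)
    (hf0 : Filter.Tendsto f (nhdsWithin 0 (Set.Ioi 0)) (nhds 0))
    (a b c : ℝ) (ha1 : a ≤ 1) (hcb : c < b) (hb : b ≤ 1)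
    (hac : a ≠ c)
    (α β : ℝ → Fin 2 → ℝ)
    (hα : ∀ δ, α δ = ![1 - δ * f δ, δ * f δ])
    (hβ : ∀ δ, β δ = ![1 - δ, δ]) :
    Filter.Tendsto
      (fun δ => KL (fun i => b * α δ i + (1 - b) * β δ i)
                   (fun i => a * α δ i + (1 - a) * β δ i) /
                KL (fun i => c * α δ i + (1 - c) * β δ i)
                   (fun i => a * α δ i + (1 - a) * β δ i))
      (nhdsWithin 0 (Set.Ioo 0 1)) (nhds (rho a b c)) := by
  have hl : 𝓝[Ioo (0:ℝ) 1] 0 ≤ 𝓝[≠] 0 := nhdsWithin_mono _ fun _ hx => hx.1.ne'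
  have hf : Tendsto f (𝓝[Ioo (0:ℝ) 1] 0) (𝓝 0) :=
    hf0.mono_left (nhdsWithin_mono _ Ioo_subset_Ioi_self)
  have hc : c < 1 := hcb.trans_le hb
  simp only [hα, hβ, mix_eq_tailWeight]
  rcases ha1.lt_or_eq with ha1 | rfl
  · rw [rho, if_pos ha1]
    exact tendsto_KL_ratio_of_lt_one hl hf ha1 hc hac
  · rw [rho, if_neg (lt_irrefl 1), tailWeight_one]
    exact tendsto_KL_ratio_of_eq_one hl hf hc

theorem stmt15 (f : ℝ → ℝ)
    (hf : ∀ δ ∈ Set.Ioo (0:ℝ) 1, 0 ≤ f δ ∧ f δ < 1)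
    (hf0 : Filter.Tendsto f (nhdsWithin 0 (Set.Ioi 0)) (nhds 0))
    (a b c : ℝ) (ha : 0 ≤ a) (ha1 : a ≤ 1) (hc : 0 ≤ c) (hcb : c < b) (hb : b ≤ 1)
    (hab : a ≠ b) (hac : a ≠ c)
    (α β : ℝ → Fin 2 → ℝ)
    (hα : ∀ δ, α δ = ![1 - δ * f δ, δ * f δ])
    (hβ : ∀ δ, β δ = ![1 - δ, δ]) :
    Filter.Tendsto
      (fun δ => KL (fun i => b * α δ i + (1 - b) * β δ i)
                   (fun i => a * α δ i + (1 - a) * β δ i) /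
                KL (fun i => c * α δ i + (1 - c) * β δ i)
                   (fun i => a * α δ i + (1 - a) * β δ i))
      (nhdsWithin 0 (Set.Ioo 0 1)) (nhds (rho a b c)) :=
  stmt15_general f hf0 a b c ha1 hcb hb hac α β hα hβ
end

section
/- Let A be an m×ℓ stochastic (channel) matrix and B an ℓ×n deterministic stochastic matrix (each row of B has a single 1). For each column j of A, let I(j) be a row index attaining min_i A_{i,j}, let g_j be the gap between the least and second-least entries of column j, g = min_j g_j, and M = I({1,…,ℓ}). Then γ(AB) ≥ γ(A) + (|M| − n)_+·g, where γ(C) := Σ_k min_i C_{i,k} and (x)_+ = max(x,0). -/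
/-!
A deterministic `B` is the matrix of a map `f` from the columns of `A` to those of `A * B`, so
column `k` of `A * B` is the sum of the columns of `A` in the fibre `f⁻¹ k`. For any row `i`,
at least `#(I '' T) - 1` columns `j` of a fibre `T` have `I j ≠ i`, and each of them satisfies
`A i j ≥ A (I j) j + g`. Summing over the `n` fibres, whose images under `I` cover `M`, gives
the bound.
-/

noncomputable def gammaMat {m n : ℕ} (C : Matrix (Fin m) (Fin n) ℝ) : ℝ :=
  ∑ k, ⨅ i, C i k

open Finset

lemma exists_eq_ite_of_forall_eq_zero_or_one {κ ν : Type*} [Fintype ν] [DecidableEq ν]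
    (B : Matrix κ ν ℝ) (hBdet : ∀ j k, B j k = 0 ∨ B j k = 1) (hBsum : ∀ j, ∑ k, B j k = 1) :
    ∃ f : κ → ν, ∀ j k, B j k = if f j = k then 1 else 0 := by
  have hone : ∀ j, ∃ k, B j k = 1 := fun j => by
    by_contra! h
    simpa [fun k => (hBdet j k).resolve_right (h k)] using hBsum j
  choose f hf using hone
  refine ⟨f, fun j k => ?_⟩
  split_ifs with hk
  · exact hk ▸ hf j
  · have hrest : ∑ k ∈ univ.erase (f j), B j k = 0 := by
      linarith [add_sum_erase univ (B j) (mem_univ (f j)), hf j, hBsum j]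
    have hnonneg : ∀ k ∈ univ.erase (f j), 0 ≤ B j k := fun k _ => by
      rcases hBdet j k with h | h <;> simp [h]
    exact (sum_eq_zero_iff_of_nonneg hnonneg).1 hrest k (mem_erase.2 ⟨Ne.symm hk, mem_univ k⟩)

lemma mul_ite_apply_eq_sum_fiber {ι κ ν : Type*} [Fintype κ] [DecidableEq ν]
    (A : Matrix ι κ ℝ) (f : κ → ν) (i : ι) (k : ν) :
    (A * Matrix.of fun j k => if f j = k then (1 : ℝ) else 0) i k = ∑ j with f j = k, A i j := by
  simp [Matrix.mul_apply, sum_filter]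

lemma card_image_le_card_filter_ne_add_one {κ ι : Type*} [DecidableEq ι]
    (s : Finset κ) (I : κ → ι) (i : ι) : #(s.image I) ≤ #{j ∈ s | I j ≠ i} + 1 := by
  have hsub : (s.image I).erase i ⊆ {j ∈ s | I j ≠ i}.image I := by
    intro x hx
    obtain ⟨hxi, j, hj, rfl⟩ := by simpa using hx
    exact mem_image.2 ⟨j, mem_filter.2 ⟨hj, hxi⟩, rfl⟩
  have := (card_le_card hsub).trans card_image_le
  have := pred_card_le_card_erase (s := s.image I) (a := i)
  omega

section ColumnMinima

variable {ι κ : Type*} (A : Matrix ι κ ℝ) (I : κ → ι) {g : ℝ}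
  (hgap : ∀ j i, i ≠ I j → A (I j) j + g ≤ A i j) (hg : 0 ≤ g)
include hgap hg

lemma apply_le_apply_of_gap (i : ι) (j : κ) : A (I j) j ≤ A i j := by
  rcases eq_or_ne i (I j) with rfl | h
  · rfl
  · linarith [hgap j i h]

lemma sum_min_add_card_image_mul_le_sum [DecidableEq ι] (s : Finset κ) (i : ι) :
    ∑ j ∈ s, A (I j) j + (#(s.image I) - 1 : ℝ) * g ≤ ∑ j ∈ s, A i j := by
  have hcard : (#(s.image I) - 1 : ℝ) ≤ #{j ∈ s | I j ≠ i} := by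
    have := card_image_le_card_filter_ne_add_one s I i
    rw [sub_le_iff_le_add]
    exact_mod_cast this
  have hexcess : (#(s.image I) - 1 : ℝ) * g ≤ ∑ j ∈ s, (A i j - A (I j) j) :=
    calc (#(s.image I) - 1 : ℝ) * g ≤ #{j ∈ s | I j ≠ i} * g := by gcongr
      _ = ∑ j ∈ s, if I j ≠ i then g else 0 := by rw [← sum_filter, sum_const, nsmul_eq_mul]
      _ ≤ ∑ j ∈ s, (A i j - A (I j) j) := sum_le_sum fun j _ => by
          split_ifs with h
          · linarith [hgap j i (Ne.symm h)]
          · linarith [apply_le_apply_of_gap A I hgap hg i j]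
  rw [sum_sub_distrib] at hexcess
  linarith

lemma sum_min_add_card_image_mul_le_iInf [DecidableEq ι] [Nonempty ι] (s : Finset κ) :
    ∑ j ∈ s, A (I j) j + (#(s.image I) - 1 : ℝ) * g ≤ ⨅ i, ∑ j ∈ s, A i j :=
  le_ciInf (sum_min_add_card_image_mul_le_sum A I hgap hg s)

end ColumnMinima

theorem gammaMat_add_le_gammaMat_mul {m l n : ℕ} [NeZero m] (A : Matrix (Fin m) (Fin l) ℝ)
    (f : Fin l → Fin n) (I : Fin l → Fin m) {g : ℝ}
    (hgap : ∀ j i, i ≠ I j → A (I j) j + g ≤ A i j) (hg : 0 ≤ g) :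
    gammaMat A + (#(univ.image I) - n : ℝ) * g ≤
      gammaMat (A * Matrix.of fun j k => if f j = k then (1 : ℝ) else 0) := by
  have hcover : #(univ.image I) ≤ ∑ k, #(image I {j | f j = k}) := by
    refine le_trans (card_le_card fun x hx => ?_) card_biUnion_le
    obtain ⟨j, -, rfl⟩ := mem_image.1 hx
    exact mem_biUnion.2 ⟨f j, mem_univ _, mem_image_of_mem I (by simp)⟩
  have hgammaA : gammaMat A = ∑ k, ∑ j with f j = k, A (I j) j := by
    rw [sum_fiberwise]
    exact sum_congr rfl fun j _ => (le_antisymm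
      (le_ciInf fun i => apply_le_apply_of_gap A I hgap hg i j)
      (ciInf_le (Finite.bddBelow_range _) _)).symm
  calc gammaMat A + (#(univ.image I) - n : ℝ) * g
      ≤ gammaMat A + ((∑ k, (#(image I {j | f j = k}) : ℝ)) - n) * g := by
        gcongr
        exact_mod_cast hcover
    _ = ∑ k, (∑ j with f j = k, A (I j) j + (#(image I {j | f j = k}) - 1 : ℝ) * g) := by
        simp [hgammaA, sum_add_distrib, sum_sub_distrib, ← sum_mul]
    _ ≤ ∑ k, ⨅ i, ∑ j with f j = k, A i j :=
        sum_le_sum fun k _ => sum_min_add_card_image_mul_le_iInf A I hgap hg _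
    _ = gammaMat (A * Matrix.of fun j k => if f j = k then (1 : ℝ) else 0) := by
        simp only [gammaMat, mul_ite_apply_eq_sum_fiber]

theorem stmt17_general (m l n : ℕ) [NeZero m]
    (A : Matrix (Fin m) (Fin l) ℝ) (B : Matrix (Fin l) (Fin n) ℝ)
    (hBdet : ∀ i k, B i k = 0 ∨ B i k = 1) (hBsum : ∀ i, ∑ k, B i k = 1)
    (I : Fin l → Fin m) (hI : ∀ j, A (I j) j = ⨅ i, A i j)
    (gap : Fin l → ℝ)
    (hgap : ∀ j, gap j = (⨅ i : {i : Fin m // i ≠ I j}, A i.1 j) - A (I j) j)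
    (g : ℝ) (hg : g = ⨅ j, gap j)
    (M : Finset (Fin m)) (hM : M = Finset.image I Finset.univ) :
    gammaMat (A * B) ≥ gammaMat A + max ((M.card : ℝ) - n) 0 * g := by
  obtain ⟨f, hf⟩ := exists_eq_ite_of_forall_eq_zero_or_one B hBdet hBsum
  obtain rfl : B = Matrix.of fun j k => if f j = k then 1 else 0 := Matrix.ext hf
  subst hM
  have hmin : ∀ i j, A (I j) j ≤ A i j := fun i j => hI j ▸ ciInf_le (Finite.bddBelow_range _) i
  rcases le_or_gt (#(univ.image I) : ℝ) n with hsmall | hlarge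
  · simpa [max_eq_right (sub_nonpos.2 hsmall)] using
      gammaMat_add_le_gammaMat_mul A f I (g := 0) (fun j i _ => by simpa using hmin i j) le_rfl
  have hother : ∀ j, ∃ i, i ≠ I j := fun j => by
    have hn : (1 : ℝ) ≤ n := by exact_mod_cast (f j).pos
    have : 1 < #(univ.image I) := by exact_mod_cast hn.trans_lt hlarge
    obtain ⟨i, -, hi⟩ := exists_mem_ne this (I j)
    exact ⟨i, hi⟩
  have hg_le_gap : ∀ j i, i ≠ I j → A (I j) j + g ≤ A i j := fun j i hi => by
    have := ciInf_le (Finite.bddBelow_range fun i' : {i' // i' ≠ I j} => A i'.1 j) ⟨i, hi⟩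
    linarith [hgap j, hg ▸ ciInf_le (Finite.bddBelow_range gap) j]
  have hg_nonneg : 0 ≤ g := hg ▸ Real.iInf_nonneg fun j => by
    obtain ⟨i, hi⟩ := hother j
    have : Nonempty {i' // i' ≠ I j} := ⟨⟨i, hi⟩⟩
    rw [hgap j, sub_nonneg]
    exact le_ciInf fun i' => hmin i'.1 j
  simpa [max_eq_left (sub_nonneg.2 hlarge.le)] using
    gammaMat_add_le_gammaMat_mul A f I hg_le_gap hg_nonneg

theorem stmt17 (m l n : ℕ) [NeZero m] [NeZero l] [NeZero n]
    (A : Matrix (Fin m) (Fin l) ℝ) (B : Matrix (Fin l) (Fin n) ℝ)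
    (hAnn : ∀ i j, 0 ≤ A i j) (hAsum : ∀ i, ∑ j, A i j = 1)
    (hBdet : ∀ i k, B i k = 0 ∨ B i k = 1) (hBsum : ∀ i, ∑ k, B i k = 1)
    (I : Fin l → Fin m) (hI : ∀ j, A (I j) j = ⨅ i, A i j)
    (gap : Fin l → ℝ)
    (hgap : ∀ j, gap j = (⨅ i : {i : Fin m // i ≠ I j}, A i.1 j) - A (I j) j)
    (g : ℝ) (hg : g = ⨅ j, gap j)
    (M : Finset (Fin m)) (hM : M = Finset.image I Finset.univ) :
    gammaMat (A * B) ≥ gammaMat A + max ((M.card : ℝ) - n) 0 * g :=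
  stmt17_general m l n A B hBdet hBsum I hI gap hgap g hg M hM
end

section
/- Define T(a) = 1 − ξ_{1-a,↑}^{-1}(ξ_{1-a}(0)) for a ∈ (e^{-1}, 1), where ξ_{s,↑} is the restriction of ξ_s to [s,1]. Then T is strictly increasing on (e^{-1}, 1). -/
open Real Set

theorem xi_one_sub_sub_xi_zero (a u : ℝ) :
    xi (1 - a) u - xi (1 - a) 0 = zeta u u + u * log a := by
  simp only [xi, zeta, sub_sub_cancel, sub_zero, log_one]
  ring

theorem hasDerivAt_zeta_diag {u : ℝ} (hu : u < 1) :
    HasDerivAt (fun x => zeta x x) (-log (1 - u)) u := by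
  have h1u : 1 - u ≠ 0 := by linarith
  have hsub := (hasDerivAt_id' u).const_sub 1
  refine ((hasDerivAt_id' u).add (hsub.mul (hsub.log h1u))).congr_deriv ?_
  field_simp
  ring

theorem hasDerivAt_zeta_diag_div {u : ℝ} (hu0 : 0 < u) (hu1 : u < 1) :
    HasDerivAt (fun x => zeta x x / x) (-(u + log (1 - u)) / u ^ 2) u := by
  refine ((hasDerivAt_zeta_diag hu1).div (hasDerivAt_id' u) hu0.ne').congr_deriv ?_
  simp only [zeta]
  ring

theorem strictMonoOn_zeta_diag_div : StrictMonoOn (fun x => zeta x x / x) (Ioo 0 1) := by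
  refine strictMonoOn_of_hasDerivWithinAt_pos (convex_Ioo 0 1)
    (fun x hx => (hasDerivAt_zeta_diag_div hx.1 hx.2).continuousAt.continuousWithinAt)
    (f' := fun x => -(x + log (1 - x)) / x ^ 2) (fun x hx => ?_) (fun x hx => ?_) <;>
    rw [interior_Ioo] at hx
  · exact (hasDerivAt_zeta_diag_div hx.1 hx.2).hasDerivWithinAt
  · obtain ⟨hx0, hx1⟩ := hx
    have hlog : log (1 - x) < -x := by
      linarith [log_lt_sub_one_of_pos (by linarith : 0 < 1 - x) (by linarith : 1 - x ≠ 1)]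
    exact div_pos (by linarith) (by positivity)

theorem zeta_diag_div_eq_neg_log_of_xi_eq {a u : ℝ} (ha : exp (-1) < a) (ha1 : a < 1)
    (hu : u ∈ Icc (1 - a) 1) (hxi : xi (1 - a) u = xi (1 - a) 0) :
    u ∈ Ioo 0 1 ∧ zeta u u / u = -log a := by
  have hroot : zeta u u + u * log a = 0 := by
    rw [← xi_one_sub_sub_xi_zero, hxi, sub_self]
  have hloga : -1 < log a := (lt_log_iff_exp_lt (exp_pos _ |>.trans ha)).mpr ha
  have hu0 : 0 < u := by linarith [hu.1]
  have hu1 : u ≠ 1 := by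
    rintro rfl
    simp only [zeta, sub_self, zero_mul, add_zero, one_mul] at hroot
    linarith
  refine ⟨⟨hu0, lt_of_le_of_ne hu.2 hu1⟩, ?_⟩
  field_simp
  linarith

theorem stmt18 (T : ℝ → ℝ)
    (hT : ∀ a ∈ Set.Ioo (Real.exp (-1)) 1,
      1 - T a ∈ Set.Icc (1 - a) 1 ∧ xi (1 - a) (1 - T a) = xi (1 - a) 0) :
    StrictMonoOn T (Set.Ioo (Real.exp (-1)) 1) := by
  intro a ha b hb hab
  obtain ⟨hua, hga⟩ := zeta_diag_div_eq_neg_log_of_xi_eq ha.1 ha.2 (hT a ha).1 (hT a ha).2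
  obtain ⟨hub, hgb⟩ := zeta_diag_div_eq_neg_log_of_xi_eq hb.1 hb.2 (hT b hb).1 (hT b hb).2
  have hlog : log a < log b := log_lt_log (exp_pos _ |>.trans ha.1) hab
  have hlt : zeta (1 - T b) (1 - T b) / (1 - T b) < zeta (1 - T a) (1 - T a) / (1 - T a) := by
    rw [hga, hgb]
    linarith
  linarith [(strictMonoOn_zeta_diag_div.lt_iff_lt hub hua).mp hlt]
end
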